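/- arXiv:1902.10554 — 6 statements merged into one kernel-verified Lean document; each statement's English description precedes it below -/
import Mathlib

section
/- For complex ζ₁, ζ₂ with |ζ₁|>1 and |ζ₂|>1, the expansion 1/((1-ζ₁⁻¹)(1-ζ₂⁻¹)(1-ζ₁⁻¹ζ₂⁻¹)) = Σ_{ℓ₁,ℓ₂≥0} min(ℓ₁+1, ℓ₂+1) ζ₁^{-ℓ₁} ζ₂^{-ℓ₂} holds, with the double series converging absolutely. -/
/-- Equivalence regrouping ℕ³ by fibers of (k,a,b) ↦ (k+a, k+b). -/
def fiberEquiv : ℕ × ℕ × ℕ ≃ Σ ℓ : ℕ × ℕ, Fin (min ℓ.1 ℓ.2 + 1) where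
  toFun p := ⟨(p.1 + p.2.1, p.1 + p.2.2), ⟨p.1, by omega⟩⟩
  invFun s := (s.2.1, s.1.1 - s.2.1, s.1.2 - s.2.1)
  left_inv p := by obtain ⟨k, a, b⟩ := p; simp
  right_inv s := by
    obtain ⟨⟨l1, l2⟩, k, hk⟩ := s
    have hk' : k ≤ min l1 l2 := Nat.lt_succ_iff.mp hk
    have h1 : k + (l1 - k) = l1 := by omega
    have h2 : k + (l2 - k) = l2 := by omega
    refine Sigma.ext (by simp [h1, h2]) ?_
    rw [Fin.heq_ext_iff (by simp [h1, h2])]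

lemma auxF (x y : ℂ) (hx : ‖x‖ < 1) (hy : ‖y‖ < 1) :
    Summable (fun p : ℕ × ℕ × ℕ => (x * y) ^ p.1 * (x ^ p.2.1 * y ^ p.2.2)) ∧
    ∑' p : ℕ × ℕ × ℕ, (x * y) ^ p.1 * (x ^ p.2.1 * y ^ p.2.2)
      = (1 - x * y)⁻¹ * ((1 - x)⁻¹ * (1 - y)⁻¹) := by
  have hxy : ‖x * y‖ < 1 := by
    rw [norm_mul]; nlinarith [norm_nonneg x, norm_nonneg y]
  have hnx : Summable fun n : ℕ => ‖x ^ n‖ := by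
    simpa [norm_pow] using summable_geometric_of_lt_one (norm_nonneg x) hx
  have hny : Summable fun n : ℕ => ‖y ^ n‖ := by
    simpa [norm_pow] using summable_geometric_of_lt_one (norm_nonneg y) hy
  have hnxy : Summable fun n : ℕ => ‖(x * y) ^ n‖ := by
    simpa [norm_pow] using summable_geometric_of_lt_one (norm_nonneg (x * y)) hxy
  have hinnern : Summable fun z : ℕ × ℕ => ‖x ^ z.1 * y ^ z.2‖ := by
    have := Summable.mul_of_nonneg hnx hny (fun n => norm_nonneg _) (fun n => norm_nonneg _)
    simpa [norm_mul] using this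
  refine ⟨summable_mul_of_summable_norm (f := fun n : ℕ => (x * y) ^ n)
    (g := fun z : ℕ × ℕ => x ^ z.1 * y ^ z.2) hnxy hinnern, ?_⟩
  rw [← tsum_mul_tsum_of_summable_norm (f := fun n : ℕ => (x * y) ^ n)
    (g := fun z : ℕ × ℕ => x ^ z.1 * y ^ z.2) hnxy hinnern,
    ← tsum_mul_tsum_of_summable_norm (f := fun n : ℕ => x ^ n)
    (g := fun n : ℕ => y ^ n) hnx hny,
    tsum_geometric_of_norm_lt_one hxy, tsum_geometric_of_norm_lt_one hx,
    tsum_geometric_of_norm_lt_one hy]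

lemma auxMain (x y : ℂ) (hx : ‖x‖ < 1) (hy : ‖y‖ < 1) :
    Summable (fun ℓ : ℕ × ℕ => ((min ℓ.1 ℓ.2 + 1 : ℕ) : ℂ) * (x ^ ℓ.1 * y ^ ℓ.2)) ∧
    ∑' ℓ : ℕ × ℕ, ((min ℓ.1 ℓ.2 + 1 : ℕ) : ℂ) * (x ^ ℓ.1 * y ^ ℓ.2)
      = (1 - x * y)⁻¹ * ((1 - x)⁻¹ * (1 - y)⁻¹) := by
  obtain ⟨hFsum, hFval⟩ := auxF x y hx hy
  have hGsum : Summable fun s : Σ ℓ : ℕ × ℕ, Fin (min ℓ.1 ℓ.2 + 1) =>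
      (x * y) ^ (fiberEquiv.symm s).1 *
        (x ^ (fiberEquiv.symm s).2.1 * y ^ (fiberEquiv.symm s).2.2) :=
    fiberEquiv.symm.summable_iff.mpr hFsum
  have hGval : ∑' s : Σ ℓ : ℕ × ℕ, Fin (min ℓ.1 ℓ.2 + 1),
      (x * y) ^ (fiberEquiv.symm s).1 *
        (x ^ (fiberEquiv.symm s).2.1 * y ^ (fiberEquiv.symm s).2.2)
      = ∑' p : ℕ × ℕ × ℕ, (x * y) ^ p.1 * (x ^ p.2.1 * y ^ p.2.2) :=
    fiberEquiv.symm.tsum_eq (fun p : ℕ × ℕ × ℕ => (x * y) ^ p.1 * (x ^ p.2.1 * y ^ p.2.2))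
  have hGfiber : ∀ (ℓ : ℕ × ℕ) (k : Fin (min ℓ.1 ℓ.2 + 1)),
      (x * y) ^ (fiberEquiv.symm ⟨ℓ, k⟩).1 *
        (x ^ (fiberEquiv.symm ⟨ℓ, k⟩).2.1 * y ^ (fiberEquiv.symm ⟨ℓ, k⟩).2.2)
      = x ^ ℓ.1 * y ^ ℓ.2 := by
    rintro ⟨l1, l2⟩ ⟨k, hk⟩
    have hk' : k ≤ min l1 l2 := Nat.lt_succ_iff.mp hk
    have h1 : k + (l1 - k) = l1 := by omega
    have h2 : k + (l2 - k) = l2 := by omega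
    simp only [fiberEquiv, Equiv.coe_fn_symm_mk]
    rw [mul_pow, mul_mul_mul_comm, ← pow_add, ← pow_add, h1, h2]
  have hT : ∀ ℓ : ℕ × ℕ, (∑' k : Fin (min ℓ.1 ℓ.2 + 1),
      (x * y) ^ (fiberEquiv.symm ⟨ℓ, k⟩).1 *
        (x ^ (fiberEquiv.symm ⟨ℓ, k⟩).2.1 * y ^ (fiberEquiv.symm ⟨ℓ, k⟩).2.2))
      = ((min ℓ.1 ℓ.2 + 1 : ℕ) : ℂ) * (x ^ ℓ.1 * y ^ ℓ.2) := by
    intro ℓ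
    rw [tsum_fintype]
    simp [hGfiber ℓ, Finset.sum_const, mul_comm]
  constructor
  · exact hGsum.sigma.congr fun ℓ => hT ℓ
  · rw [← hFval, ← hGval, hGsum.tsum_sigma]
    exact tsum_congr fun ℓ => (hT ℓ).symm

/-- For complex ζ₁, ζ₂ with |ζ₁|>1 and |ζ₂|>1, the expansion
1/((1-ζ₁⁻¹)(1-ζ₂⁻¹)(1-ζ₁⁻¹ζ₂⁻¹)) = Σ_{ℓ₁,ℓ₂≥0} min(ℓ₁+1,ℓ₂+1) ζ₁^{-ℓ₁} ζ₂^{-ℓ₂},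
with the double series converging absolutely. -/
theorem stmt0 (ζ₁ ζ₂ : ℂ) (h₁ : 1 < ‖ζ₁‖) (h₂ : 1 < ‖ζ₂‖) :
    Summable (fun ℓ : ℕ × ℕ =>
      ((min (ℓ.1 + 1) (ℓ.2 + 1) : ℕ) : ℂ) * ζ₁ ^ (-(ℓ.1 : ℤ)) * ζ₂ ^ (-(ℓ.2 : ℤ))) ∧
    ∑' ℓ : ℕ × ℕ, ((min (ℓ.1 + 1) (ℓ.2 + 1) : ℕ) : ℂ) * ζ₁ ^ (-(ℓ.1 : ℤ)) * ζ₂ ^ (-(ℓ.2 : ℤ))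
      = 1 / ((1 - ζ₁⁻¹) * (1 - ζ₂⁻¹) * (1 - ζ₁⁻¹ * ζ₂⁻¹)) := by
  have hx : ‖ζ₁⁻¹‖ < 1 := by
    rw [norm_inv]
    exact inv_lt_one_of_one_lt₀ h₁
  have hy : ‖ζ₂⁻¹‖ < 1 := by
    rw [norm_inv]
    exact inv_lt_one_of_one_lt₀ h₂
  obtain ⟨hsum, hval⟩ := auxMain ζ₁⁻¹ ζ₂⁻¹ hx hy
  have hfun : ∀ ℓ : ℕ × ℕ,
      ((min (ℓ.1 + 1) (ℓ.2 + 1) : ℕ) : ℂ) * ζ₁ ^ (-(ℓ.1 : ℤ)) * ζ₂ ^ (-(ℓ.2 : ℤ))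
        = ((min ℓ.1 ℓ.2 + 1 : ℕ) : ℂ) * (ζ₁⁻¹ ^ ℓ.1 * ζ₂⁻¹ ^ ℓ.2) := by
    intro ℓ
    rw [zpow_neg, zpow_neg, zpow_natCast, zpow_natCast, ← inv_pow, ← inv_pow,
      Nat.succ_min_succ]
    ring
  constructor
  · exact hsum.congr fun ℓ => (hfun ℓ).symm
  · rw [tsum_congr hfun, hval, one_div, mul_inv, mul_inv]
    ring
end

section
/- For |q|<|ζ|<1, one has 1/(ζ;q)_∞ = Σ_{n≥0} ζⁿ/(q;q)_n, where (a;q)_n = ∏_{j=0}^{n-1}(1-aq^j) and (a;q)_∞ = ∏_{j≥0}(1-aq^j). -/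
/-- The finite q-Pochhammer symbol (a;q)_n = ∏_{j=0}^{n-1}(1-aq^j). -/
noncomputable def qPoch (a q : ℂ) (n : ℕ) : ℂ := ∏ j ∈ Finset.range n, (1 - a * q ^ j)

/-- The infinite q-Pochhammer symbol (a;q)_∞ = ∏_{j≥0}(1-aq^j). -/
noncomputable def qPochInf (a q : ℂ) : ℂ := ∏' j : ℕ, (1 - a * q ^ j)

open Filter Topology Finset

lemma factor_norm {q : ℂ} (hq1 : ‖q‖ < 1) (j : ℕ) :
    1 - ‖q‖ ≤ ‖1 - q * q ^ j‖ := by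
  have h1 : ‖q * q ^ j‖ ≤ ‖q‖ := by
    rw [norm_mul, norm_pow]
    calc ‖q‖ * ‖q‖ ^ j ≤ ‖q‖ * 1 := by
          apply mul_le_mul_of_nonneg_left _ (norm_nonneg q)
          exact pow_le_one₀ (norm_nonneg q) hq1.le
      _ = ‖q‖ := mul_one _
  calc 1 - ‖q‖ ≤ 1 - ‖q * q ^ j‖ := by linarith
    _ ≤ ‖1 - q * q ^ j‖ := by
        have := norm_sub_norm_le (1 : ℂ) (q * q ^ j)
        simpa using this

lemma qPoch_ne_zero {q : ℂ} (hq1 : ‖q‖ < 1) (n : ℕ) : qPoch q q n ≠ 0 := by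
  have hq0 : 0 ≤ ‖q‖ := norm_nonneg q
  apply Finset.prod_ne_zero_iff.mpr
  intro j _
  intro h
  have := factor_norm hq1 j
  rw [h] at this
  simp at this
  linarith

lemma qPoch_norm_lower {q : ℂ} (hq1 : ‖q‖ < 1) (n : ℕ) :
    (1 - ‖q‖) ^ n ≤ ‖qPoch q q n‖ := by
  rw [qPoch, norm_prod]
  calc (1 - ‖q‖) ^ n = ∏ j ∈ Finset.range n, (1 - ‖q‖) := by
        rw [Finset.prod_const, Finset.card_range]
    _ ≤ ∏ j ∈ Finset.range n, ‖1 - q * q ^ j‖ := by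
        apply Finset.prod_le_prod
        · intro i _; linarith [norm_nonneg q]
        · intro i _; exact factor_norm hq1 i

lemma qPoch_zero (a q : ℂ) : qPoch a q 0 = 1 := by simp [qPoch]

lemma qPoch_succ (q : ℂ) (n : ℕ) : qPoch q q (n + 1) = qPoch q q n * (1 - q * q ^ n) := by
  rw [qPoch, qPoch, Finset.prod_range_succ]

/-- Summability of the series. -/
lemma summable_f {q : ℂ} (hq1 : ‖q‖ < 1) (w : ℂ) (hw : ‖w‖ < 1) :
    Summable (fun n : ℕ => w ^ n / qPoch q q n) := by
  by_cases hw0 : w = 0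
  · apply summable_of_ne_finset_zero (s := {0})
    intro n hn
    simp only [Finset.mem_singleton] at hn
    rw [hw0, zero_pow hn, zero_div]
  · apply summable_of_ratio_test_tendsto_lt_one hw
    · filter_upwards with n
      exact div_ne_zero (pow_ne_zero n hw0) (qPoch_ne_zero hq1 n)
    · have key : ∀ n : ℕ, ‖w ^ (n+1) / qPoch q q (n+1)‖ / ‖w ^ n / qPoch q q n‖
          = ‖w‖ / ‖1 - q * q ^ n‖ := by
        intro n
        have hP := qPoch_ne_zero hq1 n
        have hP1 := qPoch_ne_zero hq1 (n+1)
        have hf : (1 : ℂ) - q * q ^ n ≠ 0 := by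
          intro h
          rw [qPoch_succ, h, mul_zero] at hP1
          exact hP1 rfl
        have hwn : ‖w ^ n‖ ≠ 0 := norm_ne_zero_iff.mpr (pow_ne_zero n hw0)
        have hPn : ‖qPoch q q n‖ ≠ 0 := norm_ne_zero_iff.mpr hP
        have hfn : ‖(1:ℂ) - q * q ^ n‖ ≠ 0 := norm_ne_zero_iff.mpr hf
        have haux : ∀ a b c d : ℝ, a ≠ 0 → c ≠ 0 → d ≠ 0 →
            a * b / (c * d) / (a / c) = b / d := by
          intros a b c d ha hc hd
          field_simp
        rw [qPoch_succ, pow_succ]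
        rw [norm_div, norm_div, norm_mul, norm_mul]
        exact haux _ _ _ _ hwn hPn hfn
      simp only [key]
      have h2 : Tendsto (fun n : ℕ => ‖(1 : ℂ) - q * q ^ n‖) atTop (𝓝 1) := by
        have hq' : Tendsto (fun n : ℕ => q ^ n) atTop (𝓝 0) :=
          tendsto_pow_atTop_nhds_zero_of_norm_lt_one hq1
        have h1 : Tendsto (fun n : ℕ => (1:ℂ) - q * q ^ n) atTop (𝓝 (1 - q * 0)) :=
          tendsto_const_nhds.sub (hq'.const_mul q)
        rw [mul_zero, sub_zero] at h1
        have := h1.norm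
        rwa [norm_one] at this
      have h3 : Tendsto (fun n : ℕ => ‖w‖ / ‖(1:ℂ) - q * q ^ n‖) atTop (𝓝 (‖w‖ / 1)) :=
        tendsto_const_nhds.div h2 one_ne_zero
      rw [div_one] at h3
      exact h3

/-- The functional equation. -/
lemma func_eq {q : ℂ} (hq1 : ‖q‖ < 1) (w : ℂ) (hw : ‖w‖ < 1) :
    (∑' n : ℕ, (q * w) ^ n / qPoch q q n) = (1 - w) * ∑' n : ℕ, w ^ n / qPoch q q n := by
  have hqw : ‖q * w‖ < 1 := by
    rw [norm_mul]
    calc ‖q‖ * ‖w‖ ≤ 1 * ‖w‖ := by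
          apply mul_le_mul_of_nonneg_right hq1.le (norm_nonneg w)
      _ = ‖w‖ := one_mul _
      _ < 1 := hw
  have hS := summable_f hq1 w hw
  have hSq := summable_f hq1 (q * w) hqw
  have hS1 : Summable (fun n : ℕ => w ^ (n+1) / qPoch q q (n+1)) :=
    (summable_nat_add_iff (f := fun n : ℕ => w ^ n / qPoch q q n) 1).mpr hS
  have hSq1 : Summable (fun n : ℕ => (q*w) ^ (n+1) / qPoch q q (n+1)) :=
    (summable_nat_add_iff (f := fun n : ℕ => (q*w) ^ n / qPoch q q n) 1).mpr hSq
  have hSw : Summable (fun n : ℕ => w ^ (n+1) / qPoch q q n) := by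
    have := hS.mul_left w
    apply this.congr
    intro n
    rw [pow_succ, mul_comm (w^n) w, mul_div_assoc]
  -- expand both sides using tsum_eq_zero_add
  rw [hSq.tsum_eq_zero_add, hS.tsum_eq_zero_add]
  simp only [pow_zero, qPoch_zero, div_one]
  -- (1-w)*(1+S) = 1 + S - w - w*S
  have hmul : (1 - w) * (1 + ∑' n : ℕ, w ^ (n+1) / qPoch q q (n+1))
      = 1 + ((∑' n : ℕ, w ^ (n+1) / qPoch q q (n+1)) - (w + w * ∑' n : ℕ, w ^ (n+1) / qPoch q q (n+1))) := by
    ring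
  rw [hmul]
  congr 1
  have hws : w + w * ∑' n : ℕ, w ^ (n+1) / qPoch q q (n+1) = ∑' n : ℕ, w ^ (n+1) / qPoch q q n := by
    rw [hSw.tsum_eq_zero_add]
    simp only [zero_add, pow_one, qPoch_zero, div_one]
    congr 1
    rw [← tsum_mul_left]
    congr 1
    funext n
    rw [pow_succ, pow_succ]
    ring
  rw [hws, ← hS1.tsum_sub hSw]
  apply tsum_congr
  intro n
  have hP := qPoch_ne_zero hq1 n
  have hP1 := qPoch_ne_zero hq1 (n+1)
  rw [qPoch_succ] at hP1 ⊢
  have hf : (1 : ℂ) - q * q ^ n ≠ 0 := fun h => hP1 (by rw [h, mul_zero])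
  field_simp
  ring

/-- Iterated functional equation. -/
lemma func_eq_iter {q ζ : ℂ} (hq1 : ‖q‖ < 1) (hζ1 : ‖ζ‖ < 1) (n : ℕ) :
    (∑' k : ℕ, (q ^ n * ζ) ^ k / qPoch q q k)
      = qPoch ζ q n * ∑' k : ℕ, ζ ^ k / qPoch q q k := by
  induction n with
  | zero => simp [qPoch]
  | succ n ih =>
      have habs : ‖q ^ n * ζ‖ < 1 := by
        rw [norm_mul, norm_pow]
        calc ‖q‖ ^ n * ‖ζ‖ ≤ 1 * ‖ζ‖ := by
              apply mul_le_mul_of_nonneg_right _ (norm_nonneg ζ)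
              exact pow_le_one₀ (norm_nonneg q) hq1.le
          _ = ‖ζ‖ := one_mul _
          _ < 1 := hζ1
      have key := func_eq hq1 (q ^ n * ζ) habs
      have harr : ∀ k : ℕ, (q ^ (n+1) * ζ) ^ k = (q * (q ^ n * ζ)) ^ k := by
        intro k; ring_nf
      calc (∑' k : ℕ, (q ^ (n+1) * ζ) ^ k / qPoch q q k)
          = (∑' k : ℕ, (q * (q ^ n * ζ)) ^ k / qPoch q q k) := by
            apply tsum_congr; intro k; rw [harr]
        _ = (1 - q ^ n * ζ) * ∑' k : ℕ, (q ^ n * ζ) ^ k / qPoch q q k := key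
        _ = (1 - q ^ n * ζ) * (qPoch ζ q n * ∑' k : ℕ, ζ ^ k / qPoch q q k) := by rw [ih]
        _ = qPoch ζ q (n+1) * ∑' k : ℕ, ζ ^ k / qPoch q q k := by
            rw [qPoch, qPoch, Finset.prod_range_succ]
            rw [mul_comm ζ (q ^ n)]
            ring

/-- The series tends to 1 as the argument tends to 0 along q^n ζ. -/
lemma tendsto_f_one {q ζ : ℂ} (hq1 : ‖q‖ < 1) (hζ1 : ‖ζ‖ < 1) :
    Tendsto (fun n : ℕ => ∑' k : ℕ, (q ^ n * ζ) ^ k / qPoch q q k) atTop (𝓝 1) := by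
  set c : ℝ := 1 - ‖q‖ with hc
  have hc0 : 0 < c := by simp [hc]; linarith
  -- bound: ‖f(w) - 1‖ ≤ (‖w‖/c)/(1 - ‖w‖/c) when ‖w‖/c < 1
  have hbound : ∀ w : ℂ, ‖w‖ < 1 → ‖w‖ / c < 1 →
      ‖(∑' k : ℕ, w ^ k / qPoch q q k) - 1‖ ≤ (‖w‖/c) / (1 - ‖w‖/c) := by
    intro w hw hr
    have hS := summable_f hq1 w hw
    have hS1 : Summable (fun k : ℕ => w ^ (k+1) / qPoch q q (k+1)) :=
      (summable_nat_add_iff (f := fun k : ℕ => w ^ k / qPoch q q k) 1).mpr hS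
    have heq : (∑' k : ℕ, w ^ k / qPoch q q k) - 1
        = ∑' k : ℕ, w ^ (k+1) / qPoch q q (k+1) := by
      rw [hS.tsum_eq_zero_add]
      simp [qPoch_zero]
    rw [heq]
    set r : ℝ := ‖w‖ / c with hrdef
    have hr0 : 0 ≤ r := div_nonneg (norm_nonneg w) hc0.le
    have hgeo : Summable (fun k : ℕ => r ^ (k+1)) := by
      have := summable_geometric_of_lt_one hr0 hr
      exact (summable_nat_add_iff 1).mpr this
    have hterm : ∀ k : ℕ, ‖w ^ (k+1) / qPoch q q (k+1)‖ ≤ r ^ (k+1) := by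
      intro k
      rw [norm_div, norm_pow, hrdef, div_pow]
      have hlow := qPoch_norm_lower hq1 (k+1)
      apply div_le_div_of_nonneg_left (pow_nonneg (norm_nonneg w) _) (pow_pos hc0 _) hlow
    have hgeosum : ∑' k : ℕ, r ^ (k+1) = r / (1 - r) := by
      have h1 : ∀ k : ℕ, r ^ (k+1) = r * r ^ k := fun k => by rw [pow_succ]; ring
      calc ∑' k : ℕ, r ^ (k+1) = ∑' k : ℕ, r * r ^ k := tsum_congr h1
        _ = r * ∑' k : ℕ, r ^ k := tsum_mul_left
        _ = r * (1 - r)⁻¹ := by rw [tsum_geometric_of_lt_one hr0 hr]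
        _ = r / (1 - r) := by rw [div_eq_mul_inv]
    calc ‖∑' k : ℕ, w ^ (k+1) / qPoch q q (k+1)‖ ≤ ∑' k : ℕ, r ^ (k+1) :=
          tsum_of_norm_bounded hgeo.hasSum hterm
      _ = r / (1 - r) := hgeosum
  -- now the limit
  rw [tendsto_iff_norm_sub_tendsto_zero]
  set u : ℕ → ℝ := fun n => ‖q‖ ^ n * ‖ζ‖ / c with hu
  have hu0 : Tendsto u atTop (𝓝 0) := by
    have h1 : Tendsto (fun n : ℕ => ‖q‖ ^ n) atTop (𝓝 0) :=
      tendsto_pow_atTop_nhds_zero_of_lt_one (norm_nonneg q) hq1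
    have := (h1.mul_const (‖ζ‖)).div_const c
    simpa [hu] using this
  have huev : ∀ᶠ n : ℕ in atTop, u n < 1/2 :=
    hu0.eventually (eventually_lt_nhds (by norm_num : (0:ℝ) < 1/2))
  apply squeeze_zero' (Eventually.of_forall (fun n => norm_nonneg _))
    (g := fun n => u n / (1 - u n))
  · filter_upwards [huev] with n hn
    have hwn : ‖q ^ n * ζ‖ < 1 := by
      rw [norm_mul, norm_pow]
      calc ‖q‖ ^ n * ‖ζ‖ ≤ 1 * ‖ζ‖ := by
            apply mul_le_mul_of_nonneg_right _ (norm_nonneg ζ)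
            exact pow_le_one₀ (norm_nonneg q) hq1.le
        _ = ‖ζ‖ := one_mul _
        _ < 1 := hζ1
    have hun : ‖q ^ n * ζ‖ / c = u n := by
      rw [hu]; simp [norm_mul, norm_pow]
    have hr1 : ‖q ^ n * ζ‖ / c < 1 := by rw [hun]; linarith
    have := hbound (q ^ n * ζ) hwn hr1
    rw [hun] at this
    exact this
  · have : Tendsto (fun n => u n / (1 - u n)) atTop (𝓝 (0 / (1 - 0))) := by
      apply Tendsto.div hu0 (tendsto_const_nhds.sub hu0)
      norm_num
    simpa using this

/-- Multipliability of the infinite product. -/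
lemma multipliable_poch {q ζ : ℂ} (hq1 : ‖q‖ < 1) (hζ1 : ‖ζ‖ < 1) :
    Multipliable (fun j : ℕ => 1 - ζ * q ^ j) := by
  have hne : ∀ j : ℕ, (1 : ℂ) - ζ * q ^ j ≠ 0 := by
    intro j h
    have h1 : ‖ζ * q ^ j‖ ≤ ‖ζ‖ := by
      rw [norm_mul, norm_pow]
      calc ‖ζ‖ * ‖q‖ ^ j ≤ ‖ζ‖ * 1 := by
            apply mul_le_mul_of_nonneg_left _ (norm_nonneg ζ)
            exact pow_le_one₀ (norm_nonneg q) hq1.le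
        _ = ‖ζ‖ := mul_one _
    have h2 : (ζ * q ^ j) = 1 := by
      have := sub_eq_zero.mp h
      exact this.symm
    rw [h2] at h1
    simp at h1
    linarith
  have hsum : Summable (fun j : ℕ => Complex.log (1 - ζ * q ^ j)) := by
    apply Summable.of_norm_bounded_eventually_nat
      (g := fun j => 3/2 * (‖ζ‖ * ‖q‖ ^ j))
    · apply Summable.mul_left
      apply Summable.mul_left
      exact summable_geometric_of_lt_one (norm_nonneg q) hq1
    · have h0 : Tendsto (fun j : ℕ => ‖ζ‖ * ‖q‖ ^ j) atTop (𝓝 0) := by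
        have h1 : Tendsto (fun j : ℕ => ‖q‖ ^ j) atTop (𝓝 0) :=
          tendsto_pow_atTop_nhds_zero_of_lt_one (norm_nonneg q) hq1
        simpa using h1.const_mul (‖ζ‖)
      have hev : ∀ᶠ j : ℕ in atTop, ‖ζ‖ * ‖q‖ ^ j ≤ 1/2 :=
        h0.eventually (eventually_le_nhds (by norm_num : (0:ℝ) < 1/2))
      filter_upwards [hev] with j hj
      have habs : ‖-(ζ * q ^ j)‖ ≤ 1/2 := by
        rw [norm_neg, norm_mul, norm_pow]
        exact hj
      have := Complex.norm_log_one_add_half_le_self habs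
      have heq : (1 : ℂ) + -(ζ * q ^ j) = 1 - ζ * q ^ j := by ring
      rw [heq] at this
      rw [norm_neg, norm_mul, norm_pow] at this
      exact this
  exact Complex.multipliable_of_summable_log hsum

/-- For 0<|q|<1 and |ζ|<1 (with |q|<|ζ|),
1/(ζ;q)_∞ = Σ_{n≥0} ζⁿ/(q;q)_n. -/
theorem stmt4 (q ζ : ℂ) (hq0 : 0 < ‖q‖) (hq1 : ‖q‖ < 1)
    (hqζ : ‖q‖ < ‖ζ‖) (hζ1 : ‖ζ‖ < 1) :
    1 / qPochInf ζ q = ∑' n : ℕ, ζ ^ n / qPoch q q n := by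
  set S : ℂ := ∑' n : ℕ, ζ ^ n / qPoch q q n with hS
  have hmult := multipliable_poch hq1 hζ1
  have hprod : Tendsto (fun n : ℕ => qPoch ζ q n) atTop (𝓝 (qPochInf ζ q)) := by
    have := hmult.hasProd.tendsto_prod_nat
    exact this
  have h1 : Tendsto (fun n : ℕ => qPoch ζ q n * S) atTop (𝓝 (qPochInf ζ q * S)) :=
    hprod.mul_const S
  have h2 : Tendsto (fun n : ℕ => qPoch ζ q n * S) atTop (𝓝 1) := by
    have heq : (fun n : ℕ => qPoch ζ q n * S)
        = fun n : ℕ => ∑' k : ℕ, (q ^ n * ζ) ^ k / qPoch q q k := by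
      funext n
      exact (func_eq_iter hq1 hζ1 n).symm
    rw [heq]
    exact tendsto_f_one hq1 hζ1
  have hkey : qPochInf ζ q * S = 1 := tendsto_nhds_unique h1 h2
  exact (eq_one_div_of_mul_eq_one_left (by rw [mul_comm]; exact hkey)).symm
end

section
/- The two rearranged double series agree: Σ_{n₁,n₂≥0} q^{(n₁+n₂)/2} ζ^{n₁-n₂}/((q;q)_{n₁}(q;q)_{n₂}) = Σ_{n₁∈ℤ, n₂≥0} q^{|n₁|/2+n₂} ζ^{n₁}/((q;q)_{n₂}(q;q)_{|n₁|+n₂}), for 0<|q|<1 and |q|<|ζ|²<|q|⁻¹. -/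
def pairEquiv : ℕ × ℕ ≃ ℤ × ℕ where
  toFun p := ((p.1 : ℤ) - p.2, min p.1 p.2)
  invFun x := (x.1.toNat + x.2, (-x.1).toNat + x.2)
  left_inv p := by
    obtain ⟨a, b⟩ := p
    simp only [Prod.mk.injEq]
    constructor <;> omega
  right_inv x := by
    obtain ⟨m, k⟩ := x
    simp only [Prod.mk.injEq]
    constructor <;> omega

/-- For 0<|q|<1 and |q|<|ζ|²<|q|⁻¹ (s a fixed square root of q),
Σ_{n₁,n₂≥0} q^{(n₁+n₂)/2} ζ^{n₁-n₂}/((q;q)_{n₁}(q;q)_{n₂})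
 = Σ_{n₁∈ℤ, n₂≥0} q^{|n₁|/2+n₂} ζ^{n₁}/((q;q)_{n₂}(q;q)_{|n₁|+n₂}). -/
theorem stmt7 (q s ζ : ℂ) (hs : s ^ 2 = q) (hq0 : 0 < ‖q‖)
    (hq1 : ‖q‖ < 1) (hl : ‖q‖ < ‖ζ‖ ^ 2)
    (hr : ‖ζ‖ ^ 2 < (‖q‖)⁻¹) :
    ∑' n : ℕ × ℕ, s ^ (n.1 + n.2) * ζ ^ ((n.1 : ℤ) - n.2) /
        (qPoch q q n.1 * qPoch q q n.2)
      = ∑' x : ℤ × ℕ, s ^ x.1.natAbs * q ^ x.2 * ζ ^ x.1 /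
          (qPoch q q x.2 * qPoch q q (x.1.natAbs + x.2)) := by
  rw [← Equiv.tsum_eq pairEquiv]
  apply tsum_congr
  rintro ⟨a, b⟩
  simp only [pairEquiv, Equiv.coe_fn_mk]
  have hnum : s ^ (a + b) = s ^ ((a : ℤ) - b).natAbs * q ^ min a b := by
    rw [← hs, ← pow_mul, ← pow_add]
    congr 1
    omega
  have hden : qPoch q q (min a b) * qPoch q q (((a : ℤ) - b).natAbs + min a b)
      = qPoch q q a * qPoch q q b := by
    rcases le_total a b with h | h
    · rw [min_eq_left h]
      congr 2
      omega
    · rw [min_eq_right h, mul_comm]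
      congr 2
      omega
  rw [hnum, hden]
end

section
/- For 0<|q|<1 and |q|<|ζ|<1, the partial fraction identity Σ_{n∈ℤ} (-1)^n q^{n(n+1)/2}/(1-ζq^n) = Σ_{n₁,n₂∈ℤ} ϱ(n₁,n₂) (-1)^{n₁} q^{n₁(n₁+1)/2 + n₁n₂} ζ^{n₂} holds, where ϱ(n₁,n₂)=1 if n₁,n₂≥0, =-1 if n₁,n₂<0, and =0 otherwise. -/
lemma hasSum_geom_pos {K : Type*} [NormedDivisionRing K] (w : K) (hw : ‖w‖ < 1) :
    HasSum (fun n : ℤ => if 0 ≤ n then w ^ n else 0) (1 - w)⁻¹ := by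
  have h := hasSum_geometric_of_norm_lt_one hw
  have hinj : Function.Injective ((↑) : ℕ → ℤ) := fun a b h => by exact_mod_cast h
  rw [← hinj.hasSum_iff]
  · convert h using 1
    funext n
    simp [zpow_natCast]
  · intro n hn
    have hneg : n < 0 := by
      by_contra h'
      exact hn ⟨n.toNat, Int.toNat_of_nonneg (not_lt.1 h')⟩
    simp [not_le.2 hneg]

lemma hasSum_geom_neg {K : Type*} [NormedDivisionRing K] (w : K) (hw : 1 < ‖w‖) :
    HasSum (fun n : ℤ => if 0 ≤ n then 0 else w ^ n) (w - 1)⁻¹ := by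
  have hw0 : w ≠ 0 := by
    intro h; rw [h, norm_zero] at hw; linarith
  have hw1 : (w : K) ≠ 1 := by
    intro h; rw [h, norm_one] at hw; linarith
  have hwi : ‖w⁻¹‖ < 1 := by
    rw [norm_inv, inv_lt_one_iff₀]; right; exact hw
  have h := (hasSum_geometric_of_norm_lt_one hwi).mul_left w⁻¹
  have hinj : Function.Injective (fun n : ℕ => (-(n+1) : ℤ)) := by
    intro a b h; simpa using h
  rw [← hinj.hasSum_iff]
  · convert h using 1
    · rfl
    · funext n
      have hn : ¬ (0 ≤ (-((n:ℤ)+1) : ℤ)) := by omega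
      simp only [Function.comp, hn, if_false]
      rw [zpow_neg, show ((n:ℤ)+1) = ((n+1:ℕ):ℤ) by push_cast; ring, zpow_natCast,
        ← inv_pow, pow_succ']
    · rw [inv_eq_iff_eq_inv, mul_inv_rev, inv_inv, inv_inv, sub_mul, one_mul,
        inv_mul_cancel₀ hw0]
  · intro n hn
    have h0 : 0 ≤ n := by
      by_contra h'
      push_neg at h'
      refine hn ⟨(-n-1).toNat, ?_⟩
      simp only []
      omega
    simp [h0]

lemma summable_theta (r : ℝ) (h0 : 0 ≤ r) (h1 : r < 1) :
    Summable (fun n : ℤ => r ^ (n * (n + 1))) := by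
  have hnat : Summable (fun n : ℕ => r ^ (n * (n + 1))) := by
    apply Summable.of_nonneg_of_le (fun n => pow_nonneg h0 _)
      (fun n => pow_le_pow_of_le_one h0 h1.le (Nat.le_mul_of_pos_right n (by omega)))
    exact summable_geometric_of_lt_one h0 h1
  apply Summable.of_nat_of_neg
  · exact hnat.congr fun n => by
      rw [show ((n : ℤ) * ((n : ℤ) + 1)) = ((n * (n + 1) : ℕ) : ℤ) by push_cast; ring,
        zpow_natCast]
  · rw [← summable_nat_add_iff 1]
    exact hnat.congr fun n => by
      rw [show ((-((n + 1 : ℕ) : ℤ)) * ((-((n + 1 : ℕ) : ℤ)) + 1)) = ((n * (n + 1) : ℕ) : ℤ) by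
        push_cast; ring, zpow_natCast]

/-- ϱ(m,n) := (sgn*(m)+sgn*(n))/2 where sgn*(k)=1 if k≥0, -1 if k<0. -/
noncomputable def varrho (m n : ℤ) : ℂ :=
  ((if 0 ≤ m then (1 : ℂ) else -1) + (if 0 ≤ n then (1 : ℂ) else -1)) / 2

/-- For 0<|q|<|ζ|<1 (s a fixed square root of q),
Σ_{n∈ℤ} (-1)^n q^{n(n+1)/2}/(1-ζq^n)
 = Σ_{n₁,n₂∈ℤ} ϱ(n₁,n₂)(-1)^{n₁} q^{n₁(n₁+1)/2+n₁n₂} ζ^{n₂}. -/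
theorem stmt8 (q s ζ : ℂ) (hs : s ^ 2 = q) (hq0 : 0 < ‖q‖)
    (hqζ : ‖q‖ < ‖ζ‖) (hζ1 : ‖ζ‖ < 1) :
    ∑' n : ℤ, (-1 : ℂ) ^ n * s ^ (n * (n + 1)) / (1 - ζ * q ^ n)
      = ∑' n : ℤ × ℤ, varrho n.1 n.2 * (-1 : ℂ) ^ n.1 *
          s ^ (n.1 * (n.1 + 1) + 2 * n.1 * n.2) * ζ ^ n.2 := by
  have hq0' : 0 < ‖q‖ := hq0
  have hqζ' : ‖q‖ < ‖ζ‖ := hqζ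
  have hζ1' : ‖ζ‖ < 1 := hζ1
  have hq1 : ‖q‖ < 1 := lt_trans hqζ' hζ1'
  have hqne : q ≠ 0 := norm_pos_iff.mp hq0'
  have hζne : ζ ≠ 0 := by
    intro h; rw [h, norm_zero] at hqζ'; linarith
  have hsne : s ≠ 0 := by
    intro h; apply hqne; rw [← hs, h]; ring
  have hsnorm : ‖s‖ < 1 := by
    have h2 : ‖s‖ ^ 2 = ‖q‖ := by rw [← norm_pow, hs]
    nlinarith [norm_nonneg s]
  set w : ℤ → ℂ := fun n => ζ * q ^ n with hw
  set C : ℤ → ℂ := fun n => (-1 : ℂ) ^ n * s ^ (n * (n + 1)) with hC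
  set T : ℤ → ℝ := fun n => ‖s‖ ^ (n * (n + 1)) with hT
  set S : ℤ → ℝ := fun n => if 0 ≤ n then (1 - ‖w n‖)⁻¹ else (‖w n‖ - 1)⁻¹ with hS
  -- norm estimates for w
  have hwpos : ∀ n : ℤ, 0 ≤ n → ‖w n‖ ≤ ‖ζ‖ := by
    intro n hn
    lift n to ℕ using hn
    have : ‖q ^ (n : ℤ)‖ ≤ 1 := by
      rw [zpow_natCast, norm_pow]
      exact pow_le_one₀ (norm_nonneg q) hq1.le
    calc ‖w n‖ = ‖ζ‖ * ‖q ^ (n : ℤ)‖ := norm_mul ζ _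
    _ ≤ ‖ζ‖ * 1 := by
        apply mul_le_mul_of_nonneg_left this (norm_nonneg ζ)
    _ = ‖ζ‖ := mul_one _
  have hwneg : ∀ n : ℤ, ¬ 0 ≤ n → ‖ζ‖ / ‖q‖ ≤ ‖w n‖ := by
    intro n hn
    obtain ⟨k, rfl⟩ : ∃ k : ℕ, n = -((k : ℤ) + 1) := ⟨(-n - 1).toNat, by omega⟩
    have h1 : ‖q‖ ^ (k + 1) ≤ ‖q‖ := by
      calc ‖q‖ ^ (k + 1) ≤ ‖q‖ ^ 1 := pow_le_pow_of_le_one (norm_nonneg q) hq1.le (by omega)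
      _ = ‖q‖ := pow_one _
    have h2 : ‖q‖⁻¹ ≤ (‖q‖ ^ (k + 1))⁻¹ := by
      apply inv_anti₀ (pow_pos hq0' _) h1
    have h3 : ‖q ^ (-((k : ℤ) + 1))‖ = (‖q‖ ^ (k + 1))⁻¹ := by
      rw [norm_zpow, zpow_neg, show ((k : ℤ) + 1) = ((k + 1 : ℕ) : ℤ) by push_cast; ring,
        zpow_natCast]
    calc ‖ζ‖ / ‖q‖ = ‖ζ‖ * ‖q‖⁻¹ := div_eq_mul_inv _ _
    _ ≤ ‖ζ‖ * (‖q‖ ^ (k + 1))⁻¹ := by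
        apply mul_le_mul_of_nonneg_left h2 (norm_nonneg ζ)
    _ = ‖w (-((k : ℤ) + 1))‖ := by rw [hw, norm_mul, h3]
  have hKgt : 1 < ‖ζ‖ / ‖q‖ := (one_lt_div hq0').2 hqζ'
  have hwlt : ∀ n : ℤ, 0 ≤ n → ‖w n‖ < 1 := fun n hn => lt_of_le_of_lt (hwpos n hn) hζ1'
  have hwgt : ∀ n : ℤ, ¬ 0 ≤ n → 1 < ‖w n‖ := fun n hn => lt_of_lt_of_le hKgt (hwneg n hn)
  -- pointwise rewriting of the summand
  have hF : ∀ n₁ n₂ : ℤ, varrho n₁ n₂ * (-1 : ℂ) ^ n₁ *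
      s ^ (n₁ * (n₁ + 1) + 2 * n₁ * n₂) * ζ ^ n₂
      = C n₁ * (varrho n₁ n₂ * (w n₁) ^ n₂) := by
    intro n₁ n₂
    have hs2 : s ^ (2 : ℤ) = q := by
      rw [show (2 : ℤ) = ((2 : ℕ) : ℤ) from rfl, zpow_natCast, hs]
    have h1 : s ^ (n₁ * (n₁ + 1) + 2 * n₁ * n₂)
        = s ^ (n₁ * (n₁ + 1)) * q ^ (n₁ * n₂) := by
      rw [show (n₁ * (n₁ + 1) + 2 * n₁ * n₂ : ℤ) = n₁ * (n₁ + 1) + 2 * (n₁ * n₂) by ring,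
        zpow_add₀ hsne,
        show s ^ (2 * (n₁ * n₂)) = q ^ (n₁ * n₂) from by rw [zpow_mul, hs2]]
    have h2 : (w n₁) ^ n₂ = ζ ^ n₂ * q ^ (n₁ * n₂) := by
      rw [hw, mul_zpow, ← zpow_mul]
    rw [h1, hC, h2]
    ring
  -- inner complex sums
  have hinner : ∀ n₁ : ℤ, HasSum (fun n₂ : ℤ => varrho n₁ n₂ * (w n₁) ^ n₂) (1 - w n₁)⁻¹ := by
    intro n₁
    by_cases hn₁ : 0 ≤ n₁
    · have heq : (fun n₂ : ℤ => varrho n₁ n₂ * (w n₁) ^ n₂)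
          = fun n₂ : ℤ => if 0 ≤ n₂ then (w n₁) ^ n₂ else 0 := by
        funext n₂
        by_cases hn₂ : 0 ≤ n₂ <;> simp [varrho, hn₁, hn₂]
      rw [heq]
      exact hasSum_geom_pos _ (hwlt n₁ hn₁)
    · have heq : (fun n₂ : ℤ => varrho n₁ n₂ * (w n₁) ^ n₂)
          = fun n₂ : ℤ => -(if 0 ≤ n₂ then 0 else (w n₁) ^ n₂) := by
        funext n₂
        by_cases hn₂ : 0 ≤ n₂ <;> simp [varrho, hn₁, hn₂]
      rw [heq]
      have := (hasSum_geom_neg (w n₁) (hwgt n₁ hn₁)).neg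
      convert this using 1
      rfl
      rw [← inv_neg, neg_sub]
  -- inner norm sums
  have hinnernorm : ∀ n₁ : ℤ,
      HasSum (fun n₂ : ℤ => ‖C n₁ * (varrho n₁ n₂ * (w n₁) ^ n₂)‖) (T n₁ * S n₁) := by
    intro n₁
    have hCnorm : ‖C n₁‖ = T n₁ := by
      rw [hC, hT, norm_mul, norm_zpow, norm_zpow, norm_neg, norm_one, one_zpow, one_mul]
    have base : HasSum (fun n₂ : ℤ => ‖varrho n₁ n₂ * (w n₁) ^ n₂‖) (S n₁) := by
      by_cases hn₁ : 0 ≤ n₁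
      · have heq : (fun n₂ : ℤ => ‖varrho n₁ n₂ * (w n₁) ^ n₂‖)
            = fun n₂ : ℤ => if 0 ≤ n₂ then ‖w n₁‖ ^ n₂ else 0 := by
          funext n₂
          by_cases hn₂ : 0 ≤ n₂ <;>
            simp [varrho, hn₁, hn₂, norm_mul, norm_zpow]
        rw [heq]
        simp only [hS]
        rw [if_pos hn₁]
        exact hasSum_geom_pos (K := ℝ) ‖w n₁‖
          (by rw [Real.norm_eq_abs, abs_of_nonneg (norm_nonneg _)]; exact hwlt n₁ hn₁)
      · have heq : (fun n₂ : ℤ => ‖varrho n₁ n₂ * (w n₁) ^ n₂‖)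
            = fun n₂ : ℤ => if 0 ≤ n₂ then 0 else ‖w n₁‖ ^ n₂ := by
          funext n₂
          by_cases hn₂ : 0 ≤ n₂ <;>
            simp [varrho, hn₁, hn₂, norm_mul, norm_zpow]
        rw [heq]
        simp only [hS]
        rw [if_neg hn₁]
        exact hasSum_geom_neg (K := ℝ) ‖w n₁‖
          (by rw [Real.norm_eq_abs, abs_of_nonneg (norm_nonneg _)]; exact hwgt n₁ hn₁)
    have := base.mul_left ‖C n₁‖
    rw [hCnorm] at this
    convert this using 2 with n₂
    rfl
    rw [norm_mul, hCnorm]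
  -- bound on S
  have hSpos : ∀ n : ℤ, 0 ≤ S n := by
    intro n
    simp only [hS]
    by_cases hn : 0 ≤ n
    · rw [if_pos hn]
      have := hwlt n hn
      exact inv_nonneg.mpr (by linarith)
    · rw [if_neg hn]
      have := hwgt n hn
      exact inv_nonneg.mpr (by linarith)
  set M : ℝ := max (1 - ‖ζ‖)⁻¹ (‖ζ‖ / ‖q‖ - 1)⁻¹ with hM
  have hSle : ∀ n : ℤ, S n ≤ M := by
    intro n
    simp only [hS]
    by_cases hn : 0 ≤ n
    · rw [if_pos hn]
      refine le_trans ?_ (le_max_left _ _)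
      apply inv_anti₀ (by linarith)
      have := hwpos n hn; linarith
    · rw [if_neg hn]
      refine le_trans ?_ (le_max_right _ _)
      apply inv_anti₀ (by linarith)
      have := hwneg n hn; linarith
  -- summability of norms over ℤ × ℤ
  have hTnonneg : ∀ n : ℤ, 0 ≤ T n := fun n => zpow_nonneg (norm_nonneg s) _
  have houter : Summable (fun n₁ : ℤ => T n₁ * S n₁) := by
    apply Summable.of_nonneg_of_le (fun n => mul_nonneg (hTnonneg n) (hSpos n))
      (fun n => by
        calc T n * S n ≤ T n * M := mul_le_mul_of_nonneg_left (hSle n) (hTnonneg n)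
        _ = M * T n := mul_comm _ _)
    exact (summable_theta ‖s‖ (norm_nonneg s) hsnorm).mul_left M
  have hsumnorm : Summable (fun p : ℤ × ℤ => ‖C p.1 * (varrho p.1 p.2 * (w p.1) ^ p.2)‖) := by
    rw [summable_prod_of_nonneg (fun p => norm_nonneg _)]
    constructor
    · intro n₁; exact (hinnernorm n₁).summable
    · apply houter.congr
      intro n₁
      exact ((hinnernorm n₁).tsum_eq).symm
  have hsum : Summable (fun p : ℤ × ℤ => C p.1 * (varrho p.1 p.2 * (w p.1) ^ p.2)) :=
    Summable.of_norm hsumnorm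
  -- conclude
  have hrw : (fun p : ℤ × ℤ => varrho p.1 p.2 * (-1 : ℂ) ^ p.1 *
      s ^ (p.1 * (p.1 + 1) + 2 * p.1 * p.2) * ζ ^ p.2)
      = fun p : ℤ × ℤ => C p.1 * (varrho p.1 p.2 * (w p.1) ^ p.2) := by
    funext p; exact hF p.1 p.2
  calc ∑' n : ℤ, (-1 : ℂ) ^ n * s ^ (n * (n + 1)) / (1 - ζ * q ^ n)
      = ∑' n₁ : ℤ, C n₁ * (1 - w n₁)⁻¹ := by
        apply tsum_congr
        intro n₁
        rw [hC, hw, div_eq_mul_inv]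
    _ = ∑' n₁ : ℤ, ∑' n₂ : ℤ, C n₁ * (varrho n₁ n₂ * (w n₁) ^ n₂) := by
        apply tsum_congr
        intro n₁
        rw [tsum_mul_left, (hinner n₁).tsum_eq]
    _ = ∑' p : ℤ × ℤ, C p.1 * (varrho p.1 p.2 * (w p.1) ^ p.2) := (Summable.tsum_prod hsum).symm
    _ = _ := by rw [hrw]
end

section
/- The Jordan–Kronecker identity in expanded form: for 0<|q|<1, |q|<|ζ₁|<1 and |q|<|ζ₂|<1, Σ_{n∈ℤ} ζ₁ⁿ/(1-ζ₂qⁿ) = Σ_{n₁,n₂∈ℤ} ϱ(n₁,n₂) q^{n₁n₂} ζ₁^{n₁} ζ₂^{n₂}. -/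
open Function

/-- Base summability: over ℕ × ℕ, w^(ab) x^a y^b is summable when ‖w‖ ≤ 1, ‖x‖<1, ‖y‖<1. -/
lemma summable_base {w x y : ℂ} (hw : ‖w‖ ≤ 1) (hx : ‖x‖ < 1) (hy : ‖y‖ < 1) :
    Summable fun p : ℕ × ℕ => w ^ (p.1 * p.2) * x ^ p.1 * y ^ p.2 := by
  have hgx := summable_geometric_of_lt_one (norm_nonneg x) hx
  have hgy := summable_geometric_of_lt_one (norm_nonneg y) hy
  refine Summable.of_norm_bounded
    (hgx.mul_of_nonneg hgy (fun _ => pow_nonneg (norm_nonneg x) _)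
      (fun _ => pow_nonneg (norm_nonneg y) _)) ?_
  intro p
  rw [norm_mul, norm_mul, norm_pow, norm_pow, norm_pow]
  calc ‖w‖ ^ (p.1 * p.2) * ‖x‖ ^ p.1 * ‖y‖ ^ p.2
      ≤ 1 * ‖x‖ ^ p.1 * ‖y‖ ^ p.2 := by
        gcongr
        exact pow_le_one₀ (norm_nonneg w) hw
    _ = ‖x‖ ^ p.1 * ‖y‖ ^ p.2 := by ring

/-- Jordan–Kronecker identity: for 0<|q|<1, |q|<|ζ₁|<1, |q|<|ζ₂|<1,
Σ_{n∈ℤ} ζ₁ⁿ/(1-ζ₂qⁿ) = Σ_{n₁,n₂∈ℤ} ϱ(n₁,n₂) q^{n₁n₂} ζ₁^{n₁} ζ₂^{n₂}. -/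
theorem stmt9 (q ζ₁ ζ₂ : ℂ) (hq0 : 0 < ‖q‖)
    (h₁l : ‖q‖ < ‖ζ₁‖) (h₁r : ‖ζ₁‖ < 1)
    (h₂l : ‖q‖ < ‖ζ₂‖) (h₂r : ‖ζ₂‖ < 1) :
    ∑' n : ℤ, ζ₁ ^ n / (1 - ζ₂ * q ^ n)
      = ∑' n : ℤ × ℤ, varrho n.1 n.2 * q ^ (n.1 * n.2) * ζ₁ ^ n.1 * ζ₂ ^ n.2 := by
  have hq : q ≠ 0 := by intro h; simp [h] at hq0
  have hζ₁ : ζ₁ ≠ 0 := by intro h; simp only [h, norm_zero] at h₁l; exact absurd h₁l (not_lt.mpr hq0.le)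
  have hζ₂ : ζ₂ ≠ 0 := by intro h; simp only [h, norm_zero] at h₂l; exact absurd h₂l (not_lt.mpr hq0.le)
  have hq1 : ‖q‖ < 1 := by exact h₁l.trans h₁r
  have hz₁ : ‖ζ₁‖ < 1 := by exact h₁r
  have hz₂ : ‖ζ₂‖ < 1 := by exact h₂r
  have hqz₁ : ‖q * ζ₁⁻¹‖ < 1 := by
    rw [norm_mul, norm_inv]
    rw [mul_inv_lt_iff₀ (by exact hq0.trans h₁l), one_mul]
    exact h₁l
  have hqz₂ : ‖q * ζ₂⁻¹‖ < 1 := by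
    rw [norm_mul, norm_inv]
    rw [mul_inv_lt_iff₀ (by exact hq0.trans h₂l), one_mul]
    exact h₂l
  -- Summability of the positive quadrant part
  have hFp : Summable (fun n : ℤ × ℤ =>
      if 0 ≤ n.1 ∧ 0 ≤ n.2 then q ^ (n.1 * n.2) * ζ₁ ^ n.1 * ζ₂ ^ n.2 else 0) := by
    have hinj : Injective (fun p : ℕ × ℕ => ((p.1 : ℤ), (p.2 : ℤ))) := by
      intro a b h
      simp only [Prod.mk.injEq, Nat.cast_inj] at h
      exact Prod.ext h.1 h.2
    refine (hinj.summable_iff ?_).mp ?_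
    · intro n hn
      rw [if_neg]
      rintro ⟨h1, h2⟩
      exact hn ⟨(n.1.toNat, n.2.toNat), by
        simp only [Prod.ext_iff]
        constructor
        · simp [Int.toNat_of_nonneg h1]
        · simp [Int.toNat_of_nonneg h2]⟩
    · refine (summable_base hq1.le hz₁ hz₂).congr ?_
      intro p
      simp only [comp_apply]
      rw [if_pos ⟨Int.natCast_nonneg _, Int.natCast_nonneg _⟩]
      rw [show ((p.1 : ℤ) * (p.2 : ℤ)) = ((p.1 * p.2 : ℕ) : ℤ) by push_cast; ring,
        zpow_natCast, zpow_natCast, zpow_natCast]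
  -- Summability of the negative quadrant part
  have hFm : Summable (fun n : ℤ × ℤ =>
      if n.1 < 0 ∧ n.2 < 0 then -(q ^ (n.1 * n.2) * ζ₁ ^ n.1 * ζ₂ ^ n.2) else 0) := by
    have hinj : Injective (fun p : ℕ × ℕ => (-(p.1 + 1 : ℤ), -(p.2 + 1 : ℤ))) := by
      intro a b h
      simp only [Prod.mk.injEq, neg_inj, add_left_inj, Nat.cast_inj] at h
      exact Prod.ext h.1 h.2
    refine (hinj.summable_iff ?_).mp ?_
    · intro n hn
      rw [if_neg]
      rintro ⟨h1, h2⟩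
      refine hn ⟨((-n.1 - 1).toNat, (-n.2 - 1).toNat), ?_⟩
      have e1 : ((-n.1 - 1).toNat : ℤ) = -n.1 - 1 := Int.toNat_of_nonneg (by omega)
      have e2 : ((-n.2 - 1).toNat : ℤ) = -n.2 - 1 := Int.toNat_of_nonneg (by omega)
      simp only [Prod.ext_iff]
      constructor
      · simp only [e1]; omega
      · simp only [e2]; omega
    · have base := ((summable_base hq1.le hqz₁ hqz₂).mul_left
        (q * ζ₁⁻¹ * ζ₂⁻¹)).neg
      refine base.congr ?_
      intro p
      simp only [comp_apply]
      rw [if_pos ⟨by omega, by omega⟩]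
      have e1 : (-(p.1 + 1 : ℤ)) * (-(p.2 + 1 : ℤ)) = (((p.1 + 1) * (p.2 + 1) : ℕ) : ℤ) := by
        push_cast; ring
      have e2 : (-(p.1 + 1 : ℤ)) = -(((p.1 + 1 : ℕ) : ℤ)) := by push_cast; ring
      have e3 : (-(p.2 + 1 : ℤ)) = -(((p.2 + 1 : ℕ) : ℤ)) := by push_cast; ring
      rw [e1, zpow_natCast, e2, e3, zpow_neg, zpow_neg, zpow_natCast, zpow_natCast]
      rw [neg_eq_iff_eq_neg, neg_neg]
      field_simp
      rw [div_pow, div_pow, pow_succ, pow_succ]; field_simp; ring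
  -- Summability of the full double sum
  have hFsum : Summable (fun n : ℤ × ℤ =>
      varrho n.1 n.2 * q ^ (n.1 * n.2) * ζ₁ ^ n.1 * ζ₂ ^ n.2) := by
    refine (hFp.add hFm).congr ?_
    intro n
    simp only [varrho, Pi.add_apply]
    rcases le_or_gt 0 n.1 with h1 | h1 <;> rcases le_or_gt 0 n.2 with h2 | h2
    · rw [if_pos h1, if_pos h2, if_pos ⟨h1, h2⟩, if_neg (by omega)]
      ring
    · rw [if_pos h1, if_neg (not_le.mpr h2), if_neg (by omega), if_neg (by omega)]
      ring
    · rw [if_neg (not_le.mpr h1), if_pos h2, if_neg (by omega), if_neg (by omega)]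
      ring
    · rw [if_neg (not_le.mpr h1), if_neg (not_le.mpr h2), if_neg (by omega),
        if_pos ⟨h1, h2⟩]
      ring
  -- Fiberwise evaluation
  have key : ∀ n₁ : ℤ, (∑' n₂ : ℤ, varrho n₁ n₂ * q ^ (n₁ * n₂) * ζ₁ ^ n₁ * ζ₂ ^ n₂)
      = ζ₁ ^ n₁ / (1 - ζ₂ * q ^ n₁) := by
    intro n₁
    rcases le_or_gt 0 n₁ with h1 | h1
    · -- n₁ ≥ 0 : geometric series in n₂ ≥ 0
      lift n₁ to ℕ using h1 with m
      have hx : ‖ζ₂ * q ^ m‖ < 1 := by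
        rw [norm_mul, norm_pow]
        calc ‖ζ₂‖ * ‖q‖ ^ m ≤ ‖ζ₂‖ * 1 := by
              gcongr
              exact pow_le_one₀ (norm_nonneg q) hq1.le
          _ < 1 := by rwa [mul_one]
      have hinj : Injective (fun k : ℕ => (k : ℤ)) := fun a b h => Nat.cast_injective h
      have hsupp : support (fun n₂ : ℤ =>
          varrho (m : ℤ) n₂ * q ^ ((m : ℤ) * n₂) * ζ₁ ^ (m : ℤ) * ζ₂ ^ n₂)
          ⊆ Set.range (fun k : ℕ => (k : ℤ)) := by
        intro n₂ hn₂
        rcases le_or_gt 0 n₂ with h2 | h2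
        · exact ⟨n₂.toNat, Int.toNat_of_nonneg h2⟩
        · exfalso
          apply hn₂
          simp only [varrho, if_pos (Int.natCast_nonneg m), if_neg (not_le.mpr h2)]
          norm_num
      rw [← hinj.tsum_eq hsupp]
      have hterm : ∀ k : ℕ, varrho (m : ℤ) (k : ℤ) * q ^ ((m : ℤ) * (k : ℤ)) * ζ₁ ^ (m : ℤ)
          * ζ₂ ^ (k : ℤ) = ζ₁ ^ (m : ℤ) * (ζ₂ * q ^ m) ^ k := by
        intro k
        simp only [varrho, if_pos (Int.natCast_nonneg m), if_pos (Int.natCast_nonneg k)]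
        rw [show ((m : ℤ) * (k : ℤ)) = ((m * k : ℕ) : ℤ) by push_cast; ring,
          zpow_natCast, zpow_natCast (ζ₂), pow_mul, mul_pow]
        ring
      rw [tsum_congr hterm, tsum_mul_left, tsum_geometric_of_norm_lt_one hx]
      simp only [zpow_natCast, div_eq_mul_inv]
    · -- n₁ < 0 : geometric series in n₂ < 0
      obtain ⟨m, rfl⟩ : ∃ m : ℕ, n₁ = -(m + 1 : ℤ) := ⟨(-n₁ - 1).toNat, by omega⟩
      set x : ℂ := q ^ (m + 1) * ζ₂⁻¹ with hxdef
      have hQ : q ^ (m + 1) ≠ 0 := pow_ne_zero _ hq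
      have hxne : x ≠ 0 := mul_ne_zero hQ (inv_ne_zero hζ₂)
      have hx : ‖x‖ < 1 := by
        rw [hxdef, norm_mul, norm_pow, norm_inv]
        calc ‖q‖ ^ (m + 1) * ‖ζ₂‖⁻¹ ≤ ‖q‖ * ‖ζ₂‖⁻¹ := by
              gcongr
              calc ‖q‖ ^ (m + 1) ≤ ‖q‖ ^ 1 :=
                    pow_le_pow_of_le_one (norm_nonneg q) hq1.le (by omega)
                _ = ‖q‖ := pow_one _
          _ < 1 := by
              rw [mul_inv_lt_iff₀ (by exact hq0.trans h₂l), one_mul]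
              exact h₂l
      have hx1 : (1 : ℂ) - x ≠ 0 := by
        rw [sub_ne_zero]
        intro h
        rw [← h] at hx
        simp at hx
      have hinj : Injective (fun k : ℕ => -(k + 1 : ℤ)) := by
        intro a b h
        simp only [neg_inj, add_left_inj, Nat.cast_inj] at h
        exact h
      have hsupp : support (fun n₂ : ℤ =>
          varrho (-(m + 1 : ℤ)) n₂ * q ^ ((-(m + 1 : ℤ)) * n₂) * ζ₁ ^ (-(m + 1 : ℤ)) * ζ₂ ^ n₂)
          ⊆ Set.range (fun k : ℕ => -(k + 1 : ℤ)) := by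
        intro n₂ hn₂
        rcases lt_or_ge n₂ 0 with h2 | h2
        · refine ⟨(-n₂ - 1).toNat, ?_⟩
          have e : ((-n₂ - 1).toNat : ℤ) = -n₂ - 1 := Int.toNat_of_nonneg (by omega)
          simp only [e]; omega
        · exfalso
          apply hn₂
          simp only [varrho, if_pos h2, if_neg (show ¬(0 : ℤ) ≤ -(m + 1 : ℤ) by omega)]
          norm_num
      rw [← hinj.tsum_eq hsupp]
      have hterm : ∀ k : ℕ, varrho (-(m + 1 : ℤ)) (-(k + 1 : ℤ))
            * q ^ ((-(m + 1 : ℤ)) * (-(k + 1 : ℤ))) * ζ₁ ^ (-(m + 1 : ℤ)) * ζ₂ ^ (-(k + 1 : ℤ))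
          = (-(ζ₁ ^ (-(m + 1 : ℤ))) * x) * x ^ k := by
        intro k
        simp only [varrho, if_neg (show ¬(0 : ℤ) ≤ -(m + 1 : ℤ) by omega),
          if_neg (show ¬(0 : ℤ) ≤ -(k + 1 : ℤ) by omega)]
        have e1 : (-(m + 1 : ℤ)) * (-(k + 1 : ℤ)) = (((m + 1) * (k + 1) : ℕ) : ℤ) := by
          push_cast; ring
        have e3 : ζ₂ ^ (-(k + 1 : ℤ)) = (ζ₂ ^ (k + 1))⁻¹ := by
          rw [show (-(k + 1 : ℤ)) = -(((k + 1 : ℕ) : ℤ)) by push_cast; ring, zpow_neg,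
            zpow_natCast]
        rw [e1, zpow_natCast, e3]
        have hxpow : q ^ ((m + 1) * (k + 1)) * (ζ₂ ^ (k + 1))⁻¹ = x ^ (k + 1) := by
          rw [hxdef, mul_pow, ← pow_mul, inv_pow]
        rw [show ((-1 : ℂ) + -1) / 2 = -1 by norm_num]
        calc -1 * q ^ ((m + 1) * (k + 1)) * ζ₁ ^ (-(m + 1 : ℤ)) * (ζ₂ ^ (k + 1))⁻¹
            = -(ζ₁ ^ (-(m + 1 : ℤ))) * (q ^ ((m + 1) * (k + 1)) * (ζ₂ ^ (k + 1))⁻¹) := by ring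
          _ = -(ζ₁ ^ (-(m + 1 : ℤ))) * x ^ (k + 1) := by rw [hxpow]
          _ = (-(ζ₁ ^ (-(m + 1 : ℤ))) * x) * x ^ k := by rw [pow_succ]; ring
      rw [tsum_congr hterm, tsum_mul_left, tsum_geometric_of_norm_lt_one hx]
      -- Now the algebraic identity
      have hqz : q ^ (-(m + 1 : ℤ)) = (q ^ (m + 1))⁻¹ := by
        rw [show (-(m + 1 : ℤ)) = -(((m + 1 : ℕ) : ℤ)) by push_cast; ring, zpow_neg,
          zpow_natCast]
      have hden : (1 : ℂ) - ζ₂ * (q ^ (m + 1))⁻¹ ≠ 0 := by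
        intro h
        rw [sub_eq_zero] at h
        have hqm : q ^ (m + 1) = ζ₂ := by
          field_simp at h
          exact h
        have : x = 1 := by rw [hxdef, hqm, mul_inv_cancel₀ hζ₂]
        rw [this] at hx
        simp at hx
      have hxinv : ζ₂ * (q ^ (m + 1))⁻¹ = x⁻¹ := by
        rw [hxdef, mul_inv, inv_inv]; ring
      rw [hqz, eq_div_iff hden, hxinv]
      generalize ζ₁ ^ (-(m + 1 : ℤ)) = c
      have hsplit : (1 : ℂ) - x⁻¹ = -(1 - x) * x⁻¹ := by
        field_simp
        ring
      rw [hsplit]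
      calc -c * x * (1 - x)⁻¹ * (-(1 - x) * x⁻¹)
          = c * (x * x⁻¹) * ((1 - x)⁻¹ * (1 - x)) := by ring
        _ = c := by rw [mul_inv_cancel₀ hxne, inv_mul_cancel₀ hx1]; ring
  -- Assemble
  rw [Summable.tsum_prod' hFsum (fun b => hFsum.prod_factor b)]
  exact (tsum_congr key).symm
end

section
/- Ramanujan-type identity: for 0<|q|<1 and |q|<|ζ|²<|q|⁻¹, (q;q)_∞^{-2} Σ_{n₁∈ℤ, n₂≥|n₁|} (-1)^{n₁+n₂} q^{n₂(n₂+1)/2 - n₁²/2} ζ^{n₁} = (q;q)_∞^{-1} Σ_{n₁∈ℤ, n₂≥0} q^{n₂² + n₂(|n₁|+1) + |n₁|/2} ζ^{n₁} / ((q;q)_{n₂}(q;q)_{|n₁|+n₂}). -/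
namespace Stmt18Aux

open Filter Finset

lemma qPoch_succ (q : ℂ) (n : ℕ) : qPoch q q (n + 1) = qPoch q q n * (1 - q ^ (n + 1)) := by
  rw [qPoch, Finset.prod_range_succ, ← qPoch]
  ring_nf

lemma weierstrass (a : ℕ → ℝ) (h0 : ∀ i, 0 ≤ a i) (h1 : ∀ i, a i ≤ 1) (n : ℕ) :
    1 - ∑ i ∈ range n, a i ≤ ∏ i ∈ range n, (1 - a i) := by
  induction n with
  | zero => simp
  | succ n ih =>
    rw [Finset.prod_range_succ, Finset.sum_range_succ]
    rcases le_or_gt (∑ i ∈ range n, a i) 1 with h | h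
    · nlinarith [h0 n, h1 n, Finset.sum_nonneg (s := range n) (fun i _ => h0 i)]
    · have hp : (0:ℝ) ≤ ∏ i ∈ range n, (1 - a i) :=
        Finset.prod_nonneg (fun i _ => by linarith [h1 i])
      nlinarith [h0 n, h1 n]

variable {q : ℂ}

lemma geom_sum_le' (x : ℝ) (h0 : 0 ≤ x) (h1 : x < 1) (n : ℕ) :
    ∑ i ∈ range n, x ^ i ≤ (1 - x)⁻¹ := by
  rw [← tsum_geometric_of_lt_one h0 h1]
  exact Summable.sum_le_tsum _ (fun i _ => pow_nonneg h0 i) (summable_geometric_of_lt_one h0 h1)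

lemma exists_qPoch_lb (hq1 : ‖q‖ < 1) : ∃ δ : ℝ, 0 < δ ∧ ∀ n, δ ≤ ‖qPoch q q n‖ := by
  set x := ‖q‖ with hx
  have h0 : 0 ≤ x := norm_nonneg q
  have hfac : ∀ j : ℕ, 0 < 1 - x ^ (j + 1) := by
    intro j
    have : x ^ (j + 1) < 1 := pow_lt_one₀ h0 hq1 (by omega)
    linarith
  have key : ∀ n, ∏ j ∈ range n, (1 - x ^ (j + 1)) ≤ ‖qPoch q q n‖ := by
    intro n
    rw [qPoch, norm_prod]
    apply Finset.prod_le_prod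
    · intro i _; linarith [hfac i]
    · intro i _
      have h1 : ‖(1:ℂ)‖ - ‖q * q ^ i‖ ≤ ‖1 - q * q ^ i‖ := norm_sub_norm_le _ _
      have h2 : ‖q * q ^ i‖ = x ^ (i + 1) := by
        rw [norm_mul, norm_pow, pow_succ]; ring
      rw [h2, norm_one] at h1; linarith
  obtain ⟨N, hN⟩ := exists_pow_lt_of_lt_one (x := (1 - x) / 2) (by linarith) hq1
  have hpos : (0:ℝ) < 1 - x := by linarith
  have hxN : x ^ (N + 1) * (1 - x)⁻¹ ≤ 1 / 2 := by
    have h3 : x ^ (N + 1) ≤ x ^ N := pow_le_pow_of_le_one h0 (le_of_lt hq1) (by omega)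
    have h4 : x ^ (N + 1) ≤ (1 - x) / 2 := le_of_lt (lt_of_le_of_lt h3 hN)
    have h5 := mul_le_mul_of_nonneg_right h4 (inv_nonneg.mpr hpos.le)
    have hinv : (1 - x) * (1 - x)⁻¹ = 1 := mul_inv_cancel₀ (ne_of_gt hpos)
    nlinarith
  have hPn : (0:ℝ) < ∏ j ∈ range N, (1 - x ^ (j + 1)) :=
    Finset.prod_pos (fun i _ => hfac i)
  refine ⟨(∏ j ∈ range N, (1 - x ^ (j + 1))) * (1 / 2), by positivity, fun n => ?_⟩
  refine le_trans ?_ (key n)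
  rcases le_or_gt n N with h | h
  · have hIle : ∏ j ∈ Ico n N, (1 - x ^ (j + 1)) ≤ 1 :=
      Finset.prod_le_one (fun i _ => (hfac i).le) (fun i _ => by
        have : x ^ (i + 1) ≥ 0 := pow_nonneg h0 _
        linarith)
    have h2 : ∏ j ∈ range N, (1 - x ^ (j+1)) ≤ ∏ j ∈ range n, (1 - x ^ (j+1)) := by
      rw [← Finset.prod_range_mul_prod_Ico _ h]
      have hn0 : (0:ℝ) ≤ ∏ j ∈ range n, (1 - x ^ (j+1)) :=
        Finset.prod_nonneg (fun i _ => (hfac i).le)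
      calc (∏ j ∈ range n, (1 - x ^ (j+1))) * ∏ j ∈ Ico n N, (1 - x ^ (j+1))
          ≤ (∏ j ∈ range n, (1 - x ^ (j+1))) * 1 := mul_le_mul_of_nonneg_left hIle hn0
        _ = _ := mul_one _
    nlinarith
  · rw [← Finset.prod_range_mul_prod_Ico _ h.le]
    apply mul_le_mul_of_nonneg_left _ hPn.le
    rw [Finset.prod_Ico_eq_prod_range]
    have hsum : ∑ i ∈ range (n - N), x ^ (N + i + 1) ≤ 1 / 2 := by
      calc ∑ i ∈ range (n - N), x ^ (N + i + 1)
          = x ^ (N + 1) * ∑ i ∈ range (n - N), x ^ i := by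
            rw [Finset.mul_sum]
            exact Finset.sum_congr rfl (fun i _ => by rw [← pow_add]; ring_nf)
        _ ≤ x ^ (N + 1) * (1 - x)⁻¹ :=
            mul_le_mul_of_nonneg_left (geom_sum_le' x h0 hq1 _) (pow_nonneg h0 _)
        _ ≤ 1 / 2 := hxN
    have hw := weierstrass (fun i => x ^ (N + i + 1))
      (fun i => pow_nonneg h0 _)
      (fun i => (pow_lt_one₀ h0 hq1 (by omega)).le) (n - N)
    linarith

lemma qPoch_norm_pos (hq1 : ‖q‖ < 1) (n : ℕ) : 0 < ‖qPoch q q n‖ := by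
  obtain ⟨δ, hδ, h⟩ := exists_qPoch_lb hq1
  exact lt_of_lt_of_le hδ (h n)

lemma qPoch_ne_zero (hq1 : ‖q‖ < 1) (n : ℕ) : qPoch q q n ≠ 0 :=
  norm_pos_iff.mp (qPoch_norm_pos hq1 n)

open Filter Finset
variable {q : ℂ}

lemma one_sub_qpow_ne_zero (hq1 : ‖q‖ < 1) (j : ℕ) : (1 : ℂ) - q * q ^ j ≠ 0 := by
  intro h
  have h1 : q * q ^ j = 1 := by linear_combination -h
  have h2 : ‖q * q ^ j‖ < 1 := by
    rw [norm_mul, norm_pow]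
    have hp : ‖q‖ ^ j ≤ 1 := pow_le_one₀ (norm_nonneg q) hq1.le
    nlinarith [norm_nonneg q, pow_nonneg (norm_nonneg q) j]
  rw [h1, norm_one] at h2
  exact lt_irrefl _ h2

lemma multipliable_qPochInf (hq1 : ‖q‖ < 1) : Multipliable (fun j : ℕ => 1 - q * q ^ j) := by
  have := Complex.multipliable_of_summable_log (f := fun j : ℕ => 1 - q * q ^ j) ?_
  · exact this
  apply Summable.of_norm_bounded_eventually (g := fun j => 3 / 2 * ‖q‖ ^ (j + 1))
  · apply Summable.mul_left
    exact ((summable_geometric_of_lt_one (norm_nonneg q) hq1).mul_left ‖q‖).congr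
      (fun j => by rw [pow_succ]; ring)
  · rw [Nat.cofinite_eq_atTop]
    have h2 : Tendsto (fun j : ℕ => ‖q‖ ^ (j + 1)) atTop (nhds 0) := by
      have := (tendsto_pow_atTop_nhds_zero_of_lt_one (norm_nonneg q) hq1)
      exact this.comp (tendsto_add_atTop_nat 1)
    filter_upwards [h2.eventually_le_const (by norm_num : (0:ℝ) < 1/2)] with j hj
    have hn : ‖-(q * q ^ j)‖ ≤ 1 / 2 := by
      rw [norm_neg, norm_mul, norm_pow, ← pow_succ']
      exact hj
    have := Complex.norm_log_one_add_half_le_self hn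
    rw [show (1 : ℂ) + -(q * q ^ j) = 1 - q * q ^ j by ring] at this
    calc ‖Complex.log (1 - q * q ^ j)‖ ≤ 3 / 2 * ‖-(q * q ^ j)‖ := this
      _ ≤ 3 / 2 * ‖q‖ ^ (j + 1) := by
          rw [norm_neg, norm_mul, norm_pow, ← pow_succ']

lemma tendsto_qPoch (hq1 : ‖q‖ < 1) :
    Tendsto (fun n => qPoch q q n) atTop (nhds (qPochInf q q)) :=
  (multipliable_qPochInf hq1).hasProd.tendsto_prod_nat

lemma qPochInf_norm_lb (hq1 : ‖q‖ < 1) {δ : ℝ} (hδ : ∀ n, δ ≤ ‖qPoch q q n‖) :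
    δ ≤ ‖qPochInf q q‖ :=
  ge_of_tendsto' ((tendsto_qPoch hq1).norm) hδ

lemma qPochInf_ne_zero (hq1 : ‖q‖ < 1) : qPochInf q q ≠ 0 := by
  obtain ⟨δ, hδ, h⟩ := exists_qPoch_lb hq1
  have := qPochInf_norm_lb hq1 h
  exact norm_pos_iff.mp (lt_of_lt_of_le hδ this)

def Tn : ℕ → ℕ
  | 0 => 0
  | m + 1 => Tn m + (m + 1)

lemma two_Tn (m : ℕ) : 2 * Tn m = m * (m + 1) := by
  induction m with
  | zero => simp [Tn]
  | succ m ih => simp only [Tn]; rw [Nat.mul_add, ih]; ring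

lemma Tn_ge (m : ℕ) : m ≤ Tn m := by
  induction m with
  | zero => simp [Tn]
  | succ m ih => simp only [Tn]; omega

noncomputable def Bf (q : ℂ) (k m : ℕ) : ℂ := (-1) ^ m * q ^ (Tn m + m * k)
noncomputable def Bs (q : ℂ) (k : ℕ) : ℂ := ∑' m, Bf q k m
noncomputable def Af (q : ℂ) (k n : ℕ) : ℂ :=
  q ^ (n * (n + k + 1)) / (qPoch q q n * qPoch q q (n + k))
noncomputable def As (q : ℂ) (k : ℕ) : ℂ := ∑' n, Af q k n
noncomputable def Df (q : ℂ) (k n : ℕ) : ℂ :=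
  q ^ (n * (n + k + 1)) / (qPoch q q n * qPoch q q (n + k + 1))
noncomputable def Wf (q : ℂ) (k n : ℕ) : ℂ :=
  q ^ (n * (n + k + 1)) * (1 - q ^ n) / (qPoch q q n * qPoch q q (n + k + 1))

variable {q : ℂ}

lemma summable_geom_bound (hq1 : ‖q‖ < 1) (f : ℕ → ℂ) (C : ℝ)
    (h : ∀ n, ‖f n‖ ≤ C * ‖q‖ ^ n) : Summable f :=
  Summable.of_norm_bounded ((summable_geometric_of_lt_one (norm_nonneg q) hq1).mul_left C) h

lemma norm_Bf (k m : ℕ) : ‖Bf q k m‖ = ‖q‖ ^ (Tn m + m * k) := by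
  rw [Bf, norm_mul, norm_pow, norm_pow, norm_neg, norm_one, one_pow, one_mul]

lemma norm_Bf_le (hq1 : ‖q‖ < 1) (k m : ℕ) : ‖Bf q k m‖ ≤ ‖q‖ ^ m := by
  rw [norm_Bf]
  exact pow_le_pow_of_le_one (norm_nonneg q) hq1.le (le_trans (Tn_ge m) (by omega))

lemma summable_Bf (hq1 : ‖q‖ < 1) (k : ℕ) : Summable (Bf q k) :=
  summable_geom_bound hq1 _ 1 (fun m => by simpa using norm_Bf_le hq1 k m)

lemma one_sub_pow_succ_ne_zero (hq1 : ‖q‖ < 1) (j : ℕ) : (1 : ℂ) - q ^ (j + 1) ≠ 0 := by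
  have := one_sub_qpow_ne_zero hq1 j
  rwa [← pow_succ'] at this

lemma Bf_shift (k m : ℕ) : Bf q k (m + 1) = -q ^ (k + 1) * Bf q (k + 1) m := by
  simp only [Bf]
  have he : Tn (m + 1) + (m + 1) * k = (Tn m + m * (k + 1)) + (k + 1) := by
    simp only [Tn]; ring
  rw [he, pow_add, pow_succ]
  ring

lemma Bf_mul_q (k m : ℕ) : Bf q (k + 1) m = Bf q k m * q ^ m := by
  simp only [Bf]
  rw [show Tn m + m * (k + 1) = (Tn m + m * k) + m by ring, pow_add]
  ring

lemma B_rec (hq1 : ‖q‖ < 1) (k : ℕ) :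
    Bs q k = (1 - q ^ (k + 1)) * Bs q (k + 1) + q ^ (k + 2) * Bs q (k + 2) := by
  have s0 := summable_Bf hq1 k
  have s1 := summable_Bf hq1 (k + 1)
  have s2 := summable_Bf hq1 (k + 2)
  have h : Bs q k - Bs q (k + 1) = ∑' m, (Bf q k m - Bf q (k + 1) m) := (Summable.tsum_sub s0 s1).symm
  have hsub : Summable (fun m => Bf q k m - Bf q (k + 1) m) := s0.sub s1
  rw [Summable.tsum_eq_zero_add hsub, show Bf q k 0 - Bf q (k + 1) 0 = 0 by simp [Bf, Tn],
    zero_add] at h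
  have e3 : ∀ m, Bf q k (m + 1) - Bf q (k + 1) (m + 1)
      = -q ^ (k + 1) * Bf q (k + 1) m + q ^ (k + 2) * Bf q (k + 2) m := by
    intro m
    rw [Bf_shift, Bf_shift]
    ring
  rw [tsum_congr e3, Summable.tsum_add (s1.mul_left _) (s2.mul_left _), tsum_mul_left,
    tsum_mul_left] at h
  change Bs q k - Bs q (k+1) = -q ^ (k+1) * Bs q (k+1) + q ^ (k+2) * Bs q (k+2) at h
  linear_combination h

lemma tendsto_Bs (hq1 : ‖q‖ < 1) : Tendsto (fun k => Bs q k) atTop (nhds 1) := by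
  have key : ∀ k, ‖Bs q k - 1‖ ≤ ‖q‖ ^ (k + 1) * (1 - ‖q‖)⁻¹ := by
    intro k
    have hs := summable_Bf hq1 k
    have hshift : Summable (fun m => Bf q k (m + 1)) := (summable_nat_add_iff 1).mpr hs
    have h1 : Bs q k - 1 = ∑' m, Bf q k (m + 1) := by
      rw [Bs, Summable.tsum_eq_zero_add hs, show Bf q k 0 = 1 by simp [Bf, Tn]]
      ring
    rw [h1]
    have hb : ∀ m, ‖Bf q k (m + 1)‖ ≤ ‖q‖ ^ (k + 1) * ‖q‖ ^ m := by
      intro m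
      rw [norm_Bf, ← pow_add]
      apply pow_le_pow_of_le_one (norm_nonneg q) hq1.le
      have := Tn_ge (m + 1)
      calc k + 1 + m = (m + 1) + k := by ring
        _ ≤ Tn (m + 1) + (m + 1) * k := by nlinarith
    calc ‖∑' m, Bf q k (m + 1)‖ ≤ ∑' m, ‖Bf q k (m + 1)‖ :=
          norm_tsum_le_tsum_norm (hshift.norm)
      _ ≤ ∑' m, ‖q‖ ^ (k + 1) * ‖q‖ ^ m := by
          apply Summable.tsum_le_tsum hb hshift.norm
          exact (summable_geometric_of_lt_one (norm_nonneg q) hq1).mul_left _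
      _ = ‖q‖ ^ (k + 1) * (1 - ‖q‖)⁻¹ := by
          rw [tsum_mul_left, tsum_geometric_of_lt_one (norm_nonneg q) hq1]
  have h2 : Tendsto (fun k : ℕ => ‖q‖ ^ (k + 1) * (1 - ‖q‖)⁻¹) atTop (nhds 0) := by
    have h3 : Tendsto (fun k : ℕ => ‖q‖ ^ (k + 1)) atTop (nhds 0) :=
      (tendsto_pow_atTop_nhds_zero_of_lt_one (norm_nonneg q) hq1).comp
        (tendsto_add_atTop_nat 1)
    simpa using h3.mul_const (1 - ‖q‖)⁻¹
  have h3 : Tendsto (fun k => Bs q k - 1) atTop (nhds 0) := squeeze_zero_norm key h2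
  simpa using h3.add_const 1
lemma qPoch_zero (q : ℂ) : qPoch q q 0 = 1 := by simp [qPoch]

lemma norm_Af_le (hq1 : ‖q‖ < 1) {δ : ℝ} (hδ0 : 0 < δ) (hδ : ∀ n, δ ≤ ‖qPoch q q n‖)
    (k n : ℕ) : ‖Af q k n‖ ≤ (δ * δ)⁻¹ * ‖q‖ ^ n := by
  rw [Af, norm_div, norm_mul, norm_pow]
  have h1 : ‖q‖ ^ (n * (n + k + 1)) ≤ ‖q‖ ^ n :=
    pow_le_pow_of_le_one (norm_nonneg q) hq1.le (Nat.le_mul_of_pos_right n (by omega))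
  have h2 : δ * δ ≤ ‖qPoch q q n‖ * ‖qPoch q q (n + k)‖ :=
    mul_le_mul (hδ n) (hδ (n + k)) hδ0.le (norm_nonneg _)
  calc ‖q‖ ^ (n * (n + k + 1)) / (‖qPoch q q n‖ * ‖qPoch q q (n + k)‖)
      ≤ ‖q‖ ^ n / (δ * δ) :=
        div_le_div₀ (pow_nonneg (norm_nonneg q) n) h1 (by positivity) h2
    _ = (δ * δ)⁻¹ * ‖q‖ ^ n := by ring

lemma norm_Df_le (hq1 : ‖q‖ < 1) {δ : ℝ} (hδ0 : 0 < δ) (hδ : ∀ n, δ ≤ ‖qPoch q q n‖)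
    (k n : ℕ) : ‖Df q k n‖ ≤ (δ * δ)⁻¹ * ‖q‖ ^ n := by
  rw [Df, norm_div, norm_mul, norm_pow]
  have h1 : ‖q‖ ^ (n * (n + k + 1)) ≤ ‖q‖ ^ n :=
    pow_le_pow_of_le_one (norm_nonneg q) hq1.le (Nat.le_mul_of_pos_right n (by omega))
  have h2 : δ * δ ≤ ‖qPoch q q n‖ * ‖qPoch q q (n + k + 1)‖ :=
    mul_le_mul (hδ n) (hδ (n + k + 1)) hδ0.le (norm_nonneg _)
  calc ‖q‖ ^ (n * (n + k + 1)) / (‖qPoch q q n‖ * ‖qPoch q q (n + k + 1)‖)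
      ≤ ‖q‖ ^ n / (δ * δ) :=
        div_le_div₀ (pow_nonneg (norm_nonneg q) n) h1 (by positivity) h2
    _ = (δ * δ)⁻¹ * ‖q‖ ^ n := by ring

lemma norm_Wf_le (hq1 : ‖q‖ < 1) {δ : ℝ} (hδ0 : 0 < δ) (hδ : ∀ n, δ ≤ ‖qPoch q q n‖)
    (k n : ℕ) : ‖Wf q k n‖ ≤ (2 * (δ * δ)⁻¹) * ‖q‖ ^ n := by
  have h0 : Wf q k n = Df q k n * (1 - q ^ n) := by
    rw [Wf, Df]; ring
  rw [h0, norm_mul]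
  have h1 : ‖(1 : ℂ) - q ^ n‖ ≤ 2 := by
    calc ‖(1:ℂ) - q ^ n‖ ≤ ‖(1:ℂ)‖ + ‖q ^ n‖ := norm_sub_le _ _
      _ ≤ 1 + 1 := by
          rw [norm_one, norm_pow]
          exact add_le_add_right (pow_le_one₀ (norm_nonneg q) hq1.le) 1
      _ = 2 := by norm_num
  calc ‖Df q k n‖ * ‖(1:ℂ) - q ^ n‖ ≤ ((δ * δ)⁻¹ * ‖q‖ ^ n) * 2 := by
        apply mul_le_mul (norm_Df_le hq1 hδ0 hδ k n) h1 (norm_nonneg _) (by positivity)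
    _ = (2 * (δ * δ)⁻¹) * ‖q‖ ^ n := by ring

lemma summable_Af (hq1 : ‖q‖ < 1) (k : ℕ) : Summable (Af q k) := by
  obtain ⟨δ, hδ0, hδ⟩ := exists_qPoch_lb hq1
  exact summable_geom_bound hq1 _ _ (norm_Af_le hq1 hδ0 hδ k)

lemma summable_Df (hq1 : ‖q‖ < 1) (k : ℕ) : Summable (Df q k) := by
  obtain ⟨δ, hδ0, hδ⟩ := exists_qPoch_lb hq1
  exact summable_geom_bound hq1 _ _ (norm_Df_le hq1 hδ0 hδ k)

lemma summable_Wf (hq1 : ‖q‖ < 1) (k : ℕ) : Summable (Wf q k) := by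
  obtain ⟨δ, hδ0, hδ⟩ := exists_qPoch_lb hq1
  exact summable_geom_bound hq1 _ _ (norm_Wf_le hq1 hδ0 hδ k)

lemma Af_eq_Df (hq1 : ‖q‖ < 1) (k n : ℕ) :
    Af q k n = Df q k n - q ^ (k + 1) * Af q (k + 1) n := by
  have hP1 := qPoch_ne_zero hq1 n
  have hP2 := qPoch_ne_zero hq1 (n + k)
  have hc := one_sub_pow_succ_ne_zero hq1 (n + k)
  simp only [Af, Df]
  rw [show n + (k + 1) = (n + k) + 1 by ring, qPoch_succ,
    show n * ((n + k) + 1 + 1) = n * (n + k + 1) + n by ring,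
    show n + k + 1 = n + k + 1 by ring]
  field_simp
  ring

lemma Df_sub_Af (hq1 : ‖q‖ < 1) (k n : ℕ) :
    Df q k n - Af q (k + 1) n = Wf q k n := by
  have hP1 := qPoch_ne_zero hq1 n
  have hP3 := qPoch_ne_zero hq1 (n + k + 1)
  simp only [Af, Df, Wf]
  rw [show n + (k + 1) = n + k + 1 by ring,
    show n * (n + k + 1 + 1) = n * (n + k + 1) + n by ring, pow_add]
  field_simp

lemma Wf_shift (hq1 : ‖q‖ < 1) (k n : ℕ) :
    Wf q k (n + 1) = q ^ (k + 2) * Af q (k + 2) n := by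
  have hP1 := qPoch_ne_zero hq1 n
  have hP4 := qPoch_ne_zero hq1 (n + 1 + k + 1)
  have hc := one_sub_pow_succ_ne_zero hq1 n
  simp only [Af, Wf]
  rw [qPoch_succ q n,
    show (n + 1) * (n + 1 + k + 1) = n * (n + (k + 2) + 1) + (k + 2) by ring,
    show n + (k + 2) = n + 1 + k + 1 by ring, pow_add]
  rw [div_eq_iff (by
    exact mul_ne_zero (mul_ne_zero hP1 hc) hP4)]
  field_simp

lemma A_rec (hq1 : ‖q‖ < 1) (k : ℕ) :
    As q k = (1 - q ^ (k + 1)) * As q (k + 1) + q ^ (k + 2) * As q (k + 2) := by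
  have sA1 := summable_Af hq1 (k + 1)
  have sA2 := summable_Af hq1 (k + 2)
  have sD := summable_Df hq1 k
  have sW := summable_Wf hq1 k
  have h1 : As q k = (∑' n, Df q k n) - q ^ (k + 1) * As q (k + 1) := by
    rw [As, tsum_congr (Af_eq_Df hq1 k), Summable.tsum_sub sD (sA1.mul_left _), tsum_mul_left, ← As]
  have h2 : (∑' n, Df q k n) - As q (k + 1) = ∑' n, Wf q k n := by
    rw [As, ← Summable.tsum_sub sD sA1]
    exact tsum_congr (Df_sub_Af hq1 k)
  have h3 : (∑' n, Wf q k n) = q ^ (k + 2) * As q (k + 2) := by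
    rw [Summable.tsum_eq_zero_add sW, show Wf q k 0 = 0 by simp [Wf], zero_add,
      tsum_congr (Wf_shift hq1 k), tsum_mul_left, ← As]
  linear_combination h1 + h2 + h3

lemma tendsto_As (hq1 : ‖q‖ < 1) :
    Tendsto (fun k => qPochInf q q * As q k) atTop (nhds 1) := by
  obtain ⟨δ, hδ0, hδ⟩ := exists_qPoch_lb hq1
  have key : ∀ k, ‖As q k - (qPoch q q k)⁻¹‖ ≤ ‖q‖ ^ (k + 1) * ((1 - ‖q‖)⁻¹ * (δ * δ)⁻¹) := by
    intro k
    have hs := summable_Af hq1 k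
    have hshift : Summable (fun n => Af q k (n + 1)) := (summable_nat_add_iff 1).mpr hs
    have h1 : As q k - (qPoch q q k)⁻¹ = ∑' n, Af q k (n + 1) := by
      rw [As, Summable.tsum_eq_zero_add hs, show Af q k 0 = (qPoch q q k)⁻¹ by
        simp [Af, qPoch_zero]]
      ring
    rw [h1]
    have hb : ∀ n, ‖Af q k (n + 1)‖ ≤ (δ * δ)⁻¹ * (‖q‖ ^ (k + 1) * ‖q‖ ^ n) := by
      intro n
      rw [Af, norm_div, norm_mul, norm_pow]
      have h2 : ‖q‖ ^ ((n + 1) * ((n + 1) + k + 1)) ≤ ‖q‖ ^ (k + 1 + n) :=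
        pow_le_pow_of_le_one (norm_nonneg q) hq1.le (by nlinarith)
      have h3 : δ * δ ≤ ‖qPoch q q (n + 1)‖ * ‖qPoch q q ((n + 1) + k)‖ :=
        mul_le_mul (hδ _) (hδ _) hδ0.le (norm_nonneg _)
      calc ‖q‖ ^ ((n + 1) * ((n + 1) + k + 1)) / (‖qPoch q q (n + 1)‖ * ‖qPoch q q ((n + 1) + k)‖)
          ≤ ‖q‖ ^ (k + 1 + n) / (δ * δ) :=
            div_le_div₀ (pow_nonneg (norm_nonneg q) _) h2 (by positivity) h3
        _ = (δ * δ)⁻¹ * (‖q‖ ^ (k + 1) * ‖q‖ ^ n) := by rw [pow_add]; ring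
    have hgsum : Summable (fun n : ℕ => (δ * δ)⁻¹ * (‖q‖ ^ (k + 1) * ‖q‖ ^ n)) :=
      (((summable_geometric_of_lt_one (norm_nonneg q) hq1).mul_left _).mul_left _)
    calc ‖∑' n, Af q k (n + 1)‖ ≤ ∑' n, ‖Af q k (n + 1)‖ := norm_tsum_le_tsum_norm hshift.norm
      _ ≤ ∑' n, (δ * δ)⁻¹ * (‖q‖ ^ (k + 1) * ‖q‖ ^ n) := Summable.tsum_le_tsum hb hshift.norm hgsum
      _ = ‖q‖ ^ (k + 1) * ((1 - ‖q‖)⁻¹ * (δ * δ)⁻¹) := by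
          rw [tsum_mul_left, tsum_mul_left, tsum_geometric_of_lt_one (norm_nonneg q) hq1]
          ring
  have h2 : Tendsto (fun k : ℕ => ‖q‖ ^ (k + 1) * ((1 - ‖q‖)⁻¹ * (δ * δ)⁻¹)) atTop (nhds 0) := by
    have h3 : Tendsto (fun k : ℕ => ‖q‖ ^ (k + 1)) atTop (nhds 0) :=
      (tendsto_pow_atTop_nhds_zero_of_lt_one (norm_nonneg q) hq1).comp
        (tendsto_add_atTop_nat 1)
    simpa using h3.mul_const _
  have h4 : Tendsto (fun k => As q k - (qPoch q q k)⁻¹) atTop (nhds 0) :=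
    squeeze_zero_norm key h2
  have h5 : Tendsto (fun k => (qPoch q q k)⁻¹) atTop (nhds (qPochInf q q)⁻¹) :=
    (tendsto_qPoch hq1).inv₀ (qPochInf_ne_zero hq1)
  have h6 : Tendsto (fun k => As q k) atTop (nhds (qPochInf q q)⁻¹) := by
    have := h4.add h5
    simpa using this
  have h7 := h6.const_mul (qPochInf q q)
  rwa [mul_inv_cancel₀ (qPochInf_ne_zero hq1)] at h7

lemma seq_unique (hq1 : ‖q‖ < 1) (E : ℕ → ℂ)
    (hrec : ∀ k, E k = (1 - q ^ (k + 1)) * E (k + 1) + q ^ (k + 2) * E (k + 2))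
    (hlim : Tendsto E atTop (nhds 0)) : ∀ k, E k = 0 := by
  set x := ‖q‖ with hx
  have hx0 : 0 ≤ x := norm_nonneg q
  have hq1' : x < 1 := hq1
  set M : ℕ → ℝ := fun k => max ‖E k‖ ‖E (k + 1)‖ with hM
  have hMnonneg : ∀ k, 0 ≤ M k := fun k => le_trans (norm_nonneg _) (le_max_left _ _)
  have hstep : ∀ k, M k ≤ (1 + (x ^ (k + 1) + x ^ (k + 2))) * M (k + 1) := by
    intro k
    have hc : (1 : ℝ) ≤ 1 + (x ^ (k + 1) + x ^ (k + 2)) := by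
      nlinarith [pow_nonneg hx0 (k + 1), pow_nonneg hx0 (k + 2)]
    apply max_le
    · have e1 : ‖E k‖ ≤ ‖(1 - q ^ (k + 1)) * E (k + 1)‖ + ‖q ^ (k + 2) * E (k + 2)‖ := by
        rw [hrec k]; exact norm_add_le _ _
      have e2 : ‖(1 - q ^ (k + 1)) * E (k + 1)‖ ≤ (1 + x ^ (k + 1)) * M (k + 1) := by
        rw [norm_mul]
        apply mul_le_mul _ (le_max_left _ _) (norm_nonneg _) (by positivity)
        calc ‖(1 : ℂ) - q ^ (k + 1)‖ ≤ ‖(1:ℂ)‖ + ‖q ^ (k + 1)‖ := norm_sub_le _ _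
          _ = 1 + x ^ (k + 1) := by rw [norm_one, norm_pow]
      have e3 : ‖q ^ (k + 2) * E (k + 2)‖ ≤ x ^ (k + 2) * M (k + 1) := by
        rw [norm_mul, norm_pow]
        exact mul_le_mul_of_nonneg_left (le_max_right _ _) (by positivity)
      calc ‖E k‖ ≤ (1 + x ^ (k + 1)) * M (k + 1) + x ^ (k + 2) * M (k + 1) := by linarith
        _ = (1 + (x ^ (k + 1) + x ^ (k + 2))) * M (k + 1) := by ring
    · calc ‖E (k + 1)‖ ≤ M (k + 1) := le_max_left _ _
        _ ≤ (1 + (x ^ (k + 1) + x ^ (k + 2))) * M (k + 1) :=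
            le_mul_of_one_le_left (hMnonneg _) hc
  have hprod : ∀ k N, k ≤ N →
      M k ≤ (∏ j ∈ Ico k N, (1 + (x ^ (j + 1) + x ^ (j + 2)))) * M N := by
    intro k N
    induction N with
    | zero => intro hk; interval_cases k; simp
    | succ N ih =>
      intro hk
      rcases Nat.lt_or_ge k (N + 1) with h | h
      · have hkN : k ≤ N := by omega
        have h1 := ih hkN
        have h2 := hstep N
        have hpnn : (0:ℝ) ≤ ∏ j ∈ Ico k N, (1 + (x ^ (j + 1) + x ^ (j + 2))) :=
          Finset.prod_nonneg (fun i _ => by positivity)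
        calc M k ≤ (∏ j ∈ Ico k N, (1 + (x ^ (j + 1) + x ^ (j + 2)))) * M N := h1
          _ ≤ (∏ j ∈ Ico k N, (1 + (x ^ (j + 1) + x ^ (j + 2)))) *
              ((1 + (x ^ (N + 1) + x ^ (N + 2))) * M (N + 1)) :=
            mul_le_mul_of_nonneg_left h2 hpnn
          _ = (∏ j ∈ Ico k (N + 1), (1 + (x ^ (j + 1) + x ^ (j + 2)))) * M (N + 1) := by
            rw [Finset.prod_Ico_succ_top hkN]; ring
      · have : k = N + 1 := by omega
        subst this
        simp
  have hCbound : ∀ k N, (∏ j ∈ Ico k N, (1 + (x ^ (j + 1) + x ^ (j + 2))))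
      ≤ Real.exp (2 * (1 - x)⁻¹) := by
    intro k N
    have h1 : ∀ j ∈ Ico k N, (1 + (x ^ (j + 1) + x ^ (j + 2)))
        ≤ Real.exp (x ^ (j + 1) + x ^ (j + 2)) := by
      intro j _
      have := Real.add_one_le_exp (x ^ (j + 1) + x ^ (j + 2))
      linarith
    calc (∏ j ∈ Ico k N, (1 + (x ^ (j + 1) + x ^ (j + 2))))
        ≤ ∏ j ∈ Ico k N, Real.exp (x ^ (j + 1) + x ^ (j + 2)) :=
          Finset.prod_le_prod (fun i _ => by positivity) h1
      _ = Real.exp (∑ j ∈ Ico k N, (x ^ (j + 1) + x ^ (j + 2))) := (Real.exp_sum _ _).symm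
      _ ≤ Real.exp (2 * (1 - x)⁻¹) := by
          apply Real.exp_le_exp.mpr
          have hb : ∀ j ∈ Ico k N, x ^ (j + 1) + x ^ (j + 2) ≤ 2 * x ^ j := by
            intro j _
            have h1 : x ^ (j + 1) ≤ x ^ j := pow_le_pow_of_le_one hx0 hq1'.le (by omega)
            have h2 : x ^ (j + 2) ≤ x ^ j := pow_le_pow_of_le_one hx0 hq1'.le (by omega)
            linarith
          calc ∑ j ∈ Ico k N, (x ^ (j + 1) + x ^ (j + 2))
              ≤ ∑ j ∈ Ico k N, 2 * x ^ j := Finset.sum_le_sum hb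
            _ = 2 * ∑ j ∈ Ico k N, x ^ j := by rw [Finset.mul_sum]
            _ ≤ 2 * (1 - x)⁻¹ := by
                have := Summable.sum_le_tsum (Ico k N) (fun i _ => pow_nonneg hx0 i)
                  (summable_geometric_of_lt_one hx0 hq1')
                rw [tsum_geometric_of_lt_one hx0 hq1'] at this
                linarith
  intro k
  have hM0 : Tendsto M atTop (nhds 0) := by
    have h1 : Tendsto (fun k => ‖E k‖) atTop (nhds 0) := by
      simpa using hlim.norm
    have h2 : Tendsto (fun k => ‖E (k + 1)‖) atTop (nhds 0) :=
      h1.comp (tendsto_add_atTop_nat 1)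
    simpa using h1.max h2
  have hMk : M k ≤ 0 := by
    have hev : ∀ᶠ N in atTop, M k ≤ Real.exp (2 * (1 - x)⁻¹) * M N := by
      filter_upwards [eventually_ge_atTop k] with N hN
      calc M k ≤ (∏ j ∈ Ico k N, (1 + (x ^ (j + 1) + x ^ (j + 2)))) * M N := hprod k N hN
        _ ≤ Real.exp (2 * (1 - x)⁻¹) * M N :=
          mul_le_mul_of_nonneg_right (hCbound k N) (hMnonneg N)
    have hten : Tendsto (fun N => Real.exp (2 * (1 - x)⁻¹) * M N) atTop (nhds 0) := by
      simpa using hM0.const_mul (Real.exp (2 * (1 - x)⁻¹))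
    exact ge_of_tendsto hten hev
  have hMk0 : M k = 0 := le_antisymm hMk (hMnonneg k)
  have : ‖E k‖ = 0 :=
    le_antisymm (le_trans (le_max_left _ _) hMk0.le) (norm_nonneg _)
  exact norm_eq_zero.mp this

lemma Bs_eq_mul_As (hq1 : ‖q‖ < 1) (k : ℕ) : Bs q k = qPochInf q q * As q k := by
  have key := seq_unique hq1 (fun k => Bs q k - qPochInf q q * As q k)
    (fun k => by linear_combination (B_rec hq1 k) - qPochInf q q * (A_rec hq1 k))
    (by simpa using (tendsto_Bs hq1).sub (tendsto_As hq1))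
  linear_combination key k

end Stmt18Aux

open Stmt18Aux Filter Finset in

set_option maxHeartbeats 1000000 in
/-- Ramanujan-type identity: for 0<|q|<1, |q|<|ζ|²<|q|⁻¹
(s a fixed square root of q),
(q;q)_∞^{-2} Σ_{n₁∈ℤ, n₂≥|n₁|} (-1)^{n₁+n₂} q^{n₂(n₂+1)/2-n₁²/2} ζ^{n₁}
 = (q;q)_∞^{-1} Σ_{n₁∈ℤ, n₂≥0} q^{n₂²+n₂(|n₁|+1)+|n₁|/2} ζ^{n₁}/((q;q)_{n₂}(q;q)_{|n₁|+n₂}). -/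
theorem stmt18 (q s ζ : ℂ) (hs : s ^ 2 = q) (hq0 : 0 < ‖q‖)
    (hq1 : ‖q‖ < 1) (hl : ‖q‖ < ‖ζ‖ ^ 2)
    (hr : ‖ζ‖ ^ 2 < ‖q‖⁻¹) :
    (qPochInf q q) ^ (-2 : ℤ) *
      (∑' n : ℤ × ℤ, if (n.1.natAbs : ℤ) ≤ n.2 then
          (-1 : ℂ) ^ (n.1 + n.2) * s ^ (n.2 * (n.2 + 1) - n.1 ^ 2) * ζ ^ n.1
        else 0)
    = (qPochInf q q)⁻¹ *
        ∑' n : ℤ × ℕ,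
          q ^ (n.2 ^ 2 + n.2 * (n.1.natAbs + 1)) * s ^ n.1.natAbs * ζ ^ n.1 /
            (qPoch q q n.2 * qPoch q q (n.1.natAbs + n.2)) := by
  have hq1' : ‖q‖ < 1 := hq1
  have hq0' : 0 < ‖q‖ := hq0
  have hl' : ‖q‖ < ‖ζ‖ ^ 2 := hl
  have hr' : ‖ζ‖ ^ 2 < ‖q‖⁻¹ := hr
  have hζ0 : 0 < ‖ζ‖ := by nlinarith [norm_nonneg ζ]
  have hs2 : ‖s‖ ^ 2 = ‖q‖ := by rw [← norm_pow, hs]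
  have hs0 : 0 ≤ ‖s‖ := norm_nonneg s
  set r : ℝ := max (‖s‖ * ‖ζ‖) (‖s‖ * ‖ζ‖⁻¹) with hrdef
  have hr0 : 0 ≤ r := le_trans (by positivity) (le_max_left _ _)
  have hr1 : r < 1 := by
    have h1 : ‖q‖ * ‖ζ‖ ^ 2 < 1 := by
      have := mul_lt_mul_of_pos_left hr' hq0'
      rwa [mul_inv_cancel₀ (ne_of_gt hq0')] at this
    have h2 : (‖s‖ * ‖ζ‖) ^ 2 < 1 := by
      rw [mul_pow, hs2]; exact h1
    have h3 : (‖s‖ * ‖ζ‖⁻¹) ^ 2 < 1 := by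
      rw [mul_pow, hs2, inv_pow]
      rw [← div_eq_mul_inv, div_lt_one (by positivity)]
      exact hl'
    apply max_lt
    · nlinarith [mul_nonneg hs0 hζ0.le]
    · nlinarith [mul_nonneg hs0 (inv_nonneg.mpr hζ0.le)]
  obtain ⟨δ, hδ0, hδ⟩ := exists_qPoch_lb hq1'
  -- summability over ℤ of r ^ natAbs
  have sInt : Summable (fun a : ℤ => r ^ a.natAbs) := by
    apply Summable.of_nat_of_neg
    · exact (summable_geometric_of_lt_one hr0 hr1).congr (fun n => by simp)
    · exact (summable_geometric_of_lt_one hr0 hr1).congr (fun n => by simp)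
  have hc_norm : ∀ a : ℤ, ‖s ^ a.natAbs * ζ ^ a‖ ≤ r ^ a.natAbs := by
    intro a
    rw [norm_mul, norm_pow, norm_zpow]
    rcases le_or_gt 0 a with h | h
    · have hz : ‖ζ‖ ^ a = ‖ζ‖ ^ (a.natAbs : ℕ) := by
        rw [← zpow_natCast ‖ζ‖ a.natAbs, Int.natAbs_of_nonneg h]
      rw [hz, ← mul_pow]
      exact pow_le_pow_left₀ (by positivity) (le_max_left _ _) _
    · have hz : ‖ζ‖ ^ a = (‖ζ‖⁻¹) ^ (a.natAbs : ℕ) := by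
        rw [inv_pow, ← zpow_natCast ‖ζ‖ a.natAbs, ← zpow_neg]
        congr 1
        omega
      rw [hz, ← mul_pow]
      exact pow_le_pow_left₀ (by positivity) (le_max_right _ _) _
  -- LHS
  set F : ℤ × ℤ → ℂ := fun n => if (n.1.natAbs : ℤ) ≤ n.2 then
      (-1 : ℂ) ^ (n.1 + n.2) * s ^ (n.2 * (n.2 + 1) - n.1 ^ 2) * ζ ^ n.1
    else 0 with hF
  set φ : ℤ × ℕ → ℤ × ℤ := fun p => (p.1, (p.1.natAbs : ℤ) + (p.2 : ℤ)) with hφ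
  have hφinj : Function.Injective φ := by
    intro p p' h
    rw [hφ, Prod.ext_iff] at h
    obtain ⟨h1, h2⟩ := h
    simp only at h1 h2
    have : p.2 = p'.2 := by rw [h1] at h2; omega
    exact Prod.ext h1 this
  have hsupp : Function.support F ⊆ Set.range φ := by
    intro x hx
    rw [Function.mem_support] at hx
    by_cases hc : (x.1.natAbs : ℤ) ≤ x.2
    · refine ⟨(x.1, (x.2 - x.1.natAbs).toNat), ?_⟩
      rw [hφ]
      have : ((x.1.natAbs : ℤ) + ((x.2 - x.1.natAbs).toNat : ℤ)) = x.2 := by omega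
      exact Prod.ext rfl this
    · exfalso; apply hx; rw [hF]; exact if_neg hc
  have key2 : ∀ p : ℤ × ℕ, F (φ p) = (s ^ p.1.natAbs * ζ ^ p.1) * Bf q p.1.natAbs p.2 := by
    rintro ⟨a, m⟩
    have hcond : ((a.natAbs : ℤ) ≤ (a.natAbs : ℤ) + (m : ℤ)) := by omega
    show (if (a.natAbs : ℤ) ≤ ((a.natAbs : ℤ) + (m : ℤ)) then
        (-1 : ℂ) ^ (a + ((a.natAbs : ℤ) + (m : ℤ))) *
          s ^ (((a.natAbs : ℤ) + (m : ℤ)) * (((a.natAbs : ℤ) + (m : ℤ)) + 1) - a ^ 2) *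
          ζ ^ a
      else 0) = (s ^ a.natAbs * ζ ^ a) * Bf q a.natAbs m
    rw [if_pos hcond]
    obtain ⟨t, ht⟩ : ∃ t : ℤ, a + ((a.natAbs : ℤ) + (m : ℤ)) = 2 * t + (m : ℤ) :=
      ⟨(a + a.natAbs) / 2, by omega⟩
    have hsign : (-1 : ℂ) ^ (2 * t + (m : ℤ)) = (-1 : ℂ) ^ m := by
      rw [zpow_add₀ (by norm_num : (-1 : ℂ) ≠ 0), zpow_mul]
      have h2 : ((-1 : ℂ)) ^ (2 : ℤ) = 1 := by norm_num
      rw [h2, one_zpow, zpow_natCast, one_mul]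
    have habs : |a| ^ 2 = a ^ 2 := sq_abs a
    have h2T : (2 : ℤ) * (Tn m : ℤ) = (m : ℤ) * ((m : ℤ) + 1) := by
      exact_mod_cast two_Tn m
    have he : ((a.natAbs : ℤ) + (m : ℤ)) * (((a.natAbs : ℤ) + (m : ℤ)) + 1) - a ^ 2
        = ((a.natAbs + 2 * (Tn m + m * a.natAbs) : ℕ) : ℤ) := by
      push_cast
      linear_combination habs - h2T
    rw [ht, hsign, he, zpow_natCast, pow_add, pow_mul, hs, Bf]
    ring
  have SH : Summable (fun p : ℤ × ℕ => (s ^ p.1.natAbs * ζ ^ p.1) * Bf q p.1.natAbs p.2) := by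
    apply Summable.of_norm_bounded (g := fun p : ℤ × ℕ => r ^ p.1.natAbs * ‖q‖ ^ p.2)
      (sInt.mul_of_nonneg (summable_geometric_of_lt_one (norm_nonneg q) hq1')
        (fun a => by positivity) (fun n => by positivity))
    intro p
    rw [norm_mul]
    exact mul_le_mul (hc_norm p.1) (norm_Bf_le hq1' _ _) (norm_nonneg _) (by positivity)
  have hLHS : (∑' n : ℤ × ℤ, F n) = ∑' a : ℤ, ((s ^ a.natAbs * ζ ^ a) * Bs q a.natAbs) := by
    calc (∑' n : ℤ × ℤ, F n) = ∑' p : ℤ × ℕ, F (φ p) := (hφinj.tsum_eq hsupp).symm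
      _ = ∑' p : ℤ × ℕ, ((s ^ p.1.natAbs * ζ ^ p.1) * Bf q p.1.natAbs p.2) :=
          tsum_congr key2
      _ = ∑' a : ℤ, ∑' m : ℕ, ((s ^ a.natAbs * ζ ^ a) * Bf q a.natAbs m) :=
          Summable.tsum_prod' SH SH.prod_factor
      _ = ∑' a : ℤ, ((s ^ a.natAbs * ζ ^ a) * Bs q a.natAbs) := by
          apply tsum_congr; intro a
          rw [tsum_mul_left, Bs]
  -- RHS
  set G : ℤ × ℕ → ℂ := fun n =>
      q ^ (n.2 ^ 2 + n.2 * (n.1.natAbs + 1)) * s ^ n.1.natAbs * ζ ^ n.1 /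
        (qPoch q q n.2 * qPoch q q (n.1.natAbs + n.2)) with hG
  have keyG : ∀ p : ℤ × ℕ, G p = (s ^ p.1.natAbs * ζ ^ p.1) * Af q p.1.natAbs p.2 := by
    rintro ⟨a, n⟩
    show q ^ (n ^ 2 + n * (a.natAbs + 1)) * s ^ a.natAbs * ζ ^ a /
        (qPoch q q n * qPoch q q (a.natAbs + n)) = (s ^ a.natAbs * ζ ^ a) * Af q a.natAbs n
    rw [Af, show n ^ 2 + n * (a.natAbs + 1) = n * (n + a.natAbs + 1) by ring,
      show a.natAbs + n = n + a.natAbs by ring]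
    ring
  have SG2 : Summable G := by
    apply Summable.of_norm_bounded
      (g := fun p : ℤ × ℕ => r ^ p.1.natAbs * ((δ * δ)⁻¹ * ‖q‖ ^ p.2))
      (sInt.mul_of_nonneg
        (((summable_geometric_of_lt_one (norm_nonneg q) hq1').mul_left _))
        (fun a => by positivity) (fun n => by positivity))
    intro p
    rw [keyG p, norm_mul]
    exact mul_le_mul (hc_norm p.1) (norm_Af_le hq1' hδ0 hδ _ _) (norm_nonneg _)
      (by positivity)
  have hRHS : (∑' p : ℤ × ℕ, G p) = ∑' a : ℤ, ((s ^ a.natAbs * ζ ^ a) * As q a.natAbs) := by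
    calc (∑' p : ℤ × ℕ, G p)
        = ∑' p : ℤ × ℕ, ((s ^ p.1.natAbs * ζ ^ p.1) * Af q p.1.natAbs p.2) :=
          tsum_congr keyG
      _ = ∑' a : ℤ, ∑' n : ℕ, ((s ^ a.natAbs * ζ ^ a) * Af q a.natAbs n) :=
          Summable.tsum_prod' (SG2.congr keyG) (SG2.congr keyG).prod_factor
      _ = ∑' a : ℤ, ((s ^ a.natAbs * ζ ^ a) * As q a.natAbs) := by
          apply tsum_congr; intro a
          rw [tsum_mul_left, As]
  rw [hLHS, hRHS]
  have hPi := qPochInf_ne_zero hq1'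
  rw [← tsum_mul_left, ← tsum_mul_left]
  apply tsum_congr; intro a
  rw [Bs_eq_mul_As hq1' a.natAbs]
  have hz : (qPochInf q q) ^ (-2 : ℤ) = ((qPochInf q q) * (qPochInf q q))⁻¹ := by
    rw [zpow_neg]
    norm_num [sq, zpow_two]
  rw [hz]
  field_simp
end
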